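/- arXiv:1707.04214 — 7 statements merged into one kernel-verified Lean document; each statement's English description precedes it below -/
import Mathlib

section
/- For any partitions μ and ν, one has the identity E_{μ,ν} = qt·B_μ + B_ν^* - (q-1)(t-1)·B_μ·B_ν^*, where E_{μ,ν} = Σ_{□∈μ} q^{-a_ν(□)} t^{l_μ(□)+1} + Σ_{□∈ν} q^{a_μ(□)+1} t^{-l_ν(□)}. -/
open Finset

/-- A partition: weakly decreasing sequence of naturals, with `len` nonzero parts
(0-based indexing: `part 0 = μ₁`). -/
structure YDPartition where
  part : ℕ → ℕ
  len : ℕ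
  antitone : ∀ ⦃i j : ℕ⦄, i ≤ j → part j ≤ part i
  pos_iff : ∀ i, i < len ↔ 0 < part i

/-- Height of the (0-based) column `c` of the Young diagram. -/
def colHeight (p : ℕ → ℕ) (l c : ℕ) : ℕ :=
  ((Finset.range l).filter (fun r => c < p r)).card

/-- Arm length (possibly negative) of the cell in (0-based) row `r`, column `c`. -/
def armZ (p : ℕ → ℕ) (r c : ℕ) : ℤ := (p r : ℤ) - 1 - c

/-- Leg length (possibly negative) of the cell in (0-based) row `r`, column `c`. -/
def legZ (p : ℕ → ℕ) (l r c : ℕ) : ℤ :=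
  (colHeight p l c : ℤ) - 1 - r

/-- `E_{μ,ν} = Σ_{□∈μ} q^{-a_ν(□)} t^{l_μ(□)+1} + Σ_{□∈ν} q^{a_μ(□)+1} t^{-l_ν(□)}`. -/
noncomputable def Efun {K : Type*} [Field K] (q t : K)
    (pμ : ℕ → ℕ) (lμ : ℕ) (pν : ℕ → ℕ) (lν : ℕ) : K :=
  (∑ r ∈ range lμ, ∑ c ∈ range (pμ r),
      q ^ (-(armZ pν r c)) * t ^ (legZ pμ lμ r c + 1)) +
  ∑ r ∈ range lν, ∑ c ∈ range (pν r),
      q ^ (armZ pμ r c + 1) * t ^ (-(legZ pν lν r c))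

/-- `B_μ = Σ_{□∈μ} q^{c(□)} t^{r(□)}`. -/
noncomputable def Bfun {K : Type*} [Field K] (q t : K) (p : ℕ → ℕ) (l : ℕ) : K :=
  ∑ r ∈ range l, ∑ c ∈ range (p r), q ^ (c : ℤ) * t ^ (r : ℤ)

/-!
For a partition `μ` and a row index `ρ`, the boundary weight
`(1 - q) ∑_{c < μ_ρ} q^c t^{μ'_c} + q^{μ_ρ} t^ρ + (1 - t) ∑_{r < ρ} q^{μ_r} t^r`
(the rim of `μ` read along the rows above row `ρ` and along the columns from row `ρ` on)
does not depend on `ρ`, so it equals its value `1 - (q - 1)(t - 1) B_μ` at `ρ = 0`.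
Summing the first half of `E_{μ,ν}` along the rows and the second half along the columns of `ν`,
both halves become, up to the extra term `q t B_μ`, sums over the cells `(γ, ρ)` of `ν` of
`q^{-γ} t^{-ρ}` times one of the two parts of this boundary weight at row `ρ`.
-/

section Geometric

variable {K : Type*} [Field K] {x : K}

lemma one_sub_mul_geom_sum_inv (hx : x ≠ 0) (n : ℕ) :
    (1 - x) * ∑ i ∈ range n, x⁻¹ ^ i = x * x⁻¹ ^ n - x := by
  linear_combination x * geom_sum_mul x⁻¹ n - (∑ i ∈ range n, x⁻¹ ^ i) * mul_inv_cancel₀ hx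

lemma sum_range_pow_mul_inv_pow (hx : x ≠ 0) (h : ℕ) :
    ∑ r ∈ range h, x ^ h * x⁻¹ ^ r = x * ∑ r ∈ range h, x ^ r := by
  rw [mul_sum]
  conv_rhs => rw [← sum_range_reflect]
  refine sum_congr rfl fun r hr => ?_
  have hr := mem_range.mp hr
  rw [inv_pow, ← pow_sub₀ x hx hr.le, ← pow_succ']
  congr 1
  omega

lemma sum_range_inv_pow_mul_add_partial_sum (hx : x ≠ 0) (a : ℕ → K) (h : ℕ) :
    ∑ ρ ∈ range h, x⁻¹ ^ ρ * (a ρ + (1 - x) * ∑ r ∈ range ρ, a r) =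
      x * x⁻¹ ^ h * ∑ ρ ∈ range h, a ρ := by
  induction h with
  | zero => simp
  | succ h ih =>
    rw [sum_range_succ, ih, sum_range_succ, pow_succ]
    linear_combination
      (-(x⁻¹ ^ h * (∑ ρ ∈ range h, a ρ + a h))) * mul_inv_cancel₀ hx

end Geometric

namespace YDPartition

variable (μ : YDPartition)

lemma part_eq_zero_of_len_le {r : ℕ} (h : μ.len ≤ r) : μ.part r = 0 := by
  have := μ.pos_iff r
  omega

lemma lt_colHeight_iff (r c : ℕ) : r < colHeight μ.part μ.len c ↔ c < μ.part r := by
  unfold colHeight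
  constructor
  · intro h
    by_contra! hc
    have hsub : (range μ.len).filter (fun s => c < μ.part s) ⊆ range r := fun s hs => by
      simp only [mem_filter, mem_range] at hs ⊢
      by_contra! hrs
      have := μ.antitone hrs
      omega
    have := card_le_card hsub
    rw [card_range] at this
    omega
  · intro h
    have hsub : range (r + 1) ⊆ (range μ.len).filter (fun s => c < μ.part s) := fun s hs => by
      simp only [mem_filter, mem_range] at hs ⊢
      have := μ.antitone (Nat.lt_succ_iff.mp hs)
      have := μ.pos_iff s
      omega
    have := card_le_card hsub
    rw [card_range] at this
    omega

lemma colHeight_eq_succ {ρ c : ℕ} (h₁ : μ.part (ρ + 1) ≤ c) (h₂ : c < μ.part ρ) :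
    colHeight μ.part μ.len c = ρ + 1 := by
  have := μ.lt_colHeight_iff ρ c
  have := μ.lt_colHeight_iff (ρ + 1) c
  omega

variable {M : Type*} [AddCommMonoid M]

lemma sum_rows_eq_sum_cols (f : ℕ → ℕ → M) :
    ∑ r ∈ range μ.len, ∑ c ∈ range (μ.part r), f r c =
      ∑ c ∈ range (μ.part 0), ∑ r ∈ range (colHeight μ.part μ.len c), f r c :=
  sum_comm' fun r c => by
    simp only [mem_range, μ.lt_colHeight_iff]
    have := μ.pos_iff r
    have := μ.antitone (Nat.zero_le r)
    omega

lemma sum_rows_of_len_le {N : ℕ} (hN : μ.len ≤ N) (f : ℕ → ℕ → M) :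
    ∑ r ∈ range N, ∑ c ∈ range (μ.part r), f r c =
      ∑ r ∈ range μ.len, ∑ c ∈ range (μ.part r), f r c :=
  (sum_subset (range_subset_range.mpr hN) fun r _ hr => by
    rw [μ.part_eq_zero_of_len_le (by simpa using hr), range_zero, sum_empty]).symm

end YDPartition

section Boundary

variable {K : Type*} [CommRing K] (q t : K) (μ : YDPartition)

noncomputable def boundaryWeight (ρ : ℕ) : K :=
  (1 - q) * ∑ c ∈ range (μ.part ρ), q ^ c * t ^ colHeight μ.part μ.len c
    + q ^ μ.part ρ * t ^ ρ + (1 - t) * ∑ r ∈ range ρ, q ^ μ.part r * t ^ r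

lemma boundaryWeight_succ (ρ : ℕ) : boundaryWeight q t μ (ρ + 1) = boundaryWeight q t μ ρ := by
  have hle := μ.antitone (Nat.le_succ ρ)
  have hIco : ∑ c ∈ Ico (μ.part (ρ + 1)) (μ.part ρ), q ^ c * t ^ colHeight μ.part μ.len c =
      (∑ c ∈ Ico (μ.part (ρ + 1)) (μ.part ρ), q ^ c) * t ^ (ρ + 1) := by
    rw [sum_mul]
    refine sum_congr rfl fun c hc => ?_
    rw [μ.colHeight_eq_succ (mem_Ico.mp hc).1 (mem_Ico.mp hc).2]
  simp only [boundaryWeight]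
  rw [← sum_range_add_sum_Ico _ hle, hIco, sum_range_succ]
  linear_combination t ^ (ρ + 1) * geom_sum_Ico_mul q hle

end Boundary

section Efun

variable {K : Type*} [Field K] {q t : K}

lemma boundaryWeight_eq (μ : YDPartition) (ρ : ℕ) :
    boundaryWeight q t μ ρ = 1 - (q - 1) * (t - 1) * Bfun q t μ.part μ.len := by
  induction ρ with
  | zero =>
    have hcols : (t - 1) * Bfun q t μ.part μ.len =
        ∑ c ∈ range (μ.part 0), q ^ c * t ^ colHeight μ.part μ.len c -
          ∑ c ∈ range (μ.part 0), q ^ c := by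
      simp only [Bfun, zpow_natCast]
      rw [μ.sum_rows_eq_sum_cols, mul_sum, ← sum_sub_distrib]
      refine sum_congr rfl fun c _ => ?_
      rw [← mul_sum, mul_left_comm, mul_geom_sum]
      ring
    simp only [boundaryWeight, range_zero, sum_empty, pow_zero, mul_one, mul_zero, add_zero]
    linear_combination (q - 1) * hcols - geom_sum_mul q (μ.part 0)
  | succ ρ ih => rw [boundaryWeight_succ, ih]

lemma Efun_eq_sum_pow (hq : q ≠ 0) (ht : t ≠ 0) (μ ν : YDPartition) :
    Efun q t μ.part μ.len ν.part ν.len =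
      ∑ r ∈ range μ.len, ∑ c ∈ range (μ.part r),
          q ^ (c + 1) * q⁻¹ ^ ν.part r * (t ^ colHeight μ.part μ.len c * t⁻¹ ^ r) +
        ∑ r ∈ range ν.len, ∑ c ∈ range (ν.part r),
          q ^ μ.part r * q⁻¹ ^ c * (t ^ (r + 1) * t⁻¹ ^ colHeight ν.part ν.len c) := by
  unfold Efun
  congr 1 <;> refine sum_congr rfl fun r _ => sum_congr rfl fun c _ => ?_
  · rw [show -armZ ν.part r c = ((c + 1 : ℕ) : ℤ) - (ν.part r : ℕ) by simp [armZ]; ring,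
      show legZ μ.part μ.len r c + 1 = (colHeight μ.part μ.len c : ℕ) - (r : ℤ) by
        simp [legZ]; ring]
    simp only [zpow_natCast_sub_natCast₀ hq, zpow_natCast_sub_natCast₀ ht, div_eq_mul_inv,
      inv_pow]
  · rw [show armZ μ.part r c + 1 = (μ.part r : ℕ) - (c : ℤ) by simp [armZ]; ring,
      show -legZ ν.part ν.len r c = ((r + 1 : ℕ) : ℤ) - (colHeight ν.part ν.len c : ℕ) by
        simp [legZ]; ring]
    simp only [zpow_natCast_sub_natCast₀ hq, zpow_natCast_sub_natCast₀ ht, div_eq_mul_inv,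
      inv_pow]

lemma q_mul_t_mul_Bfun (ht : t ≠ 0) (μ : YDPartition) :
    q * t * Bfun q t μ.part μ.len =
      ∑ r ∈ range μ.len, ∑ c ∈ range (μ.part r),
        q ^ (c + 1) * (t ^ colHeight μ.part μ.len c * t⁻¹ ^ r) := by
  simp only [Bfun, zpow_natCast]
  rw [μ.sum_rows_eq_sum_cols, μ.sum_rows_eq_sum_cols, mul_sum]
  refine sum_congr rfl fun c _ => ?_
  conv_rhs => rw [← mul_sum, sum_range_pow_mul_inv_pow ht]
  rw [← mul_sum]
  ring

lemma Efun_fst_sum_eq (hq : q ≠ 0) (ht : t ≠ 0) (μ ν : YDPartition) :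
    ∑ r ∈ range μ.len, ∑ c ∈ range (μ.part r),
        q ^ (c + 1) * q⁻¹ ^ ν.part r * (t ^ colHeight μ.part μ.len c * t⁻¹ ^ r) =
      q * t * Bfun q t μ.part μ.len +
        ∑ ρ ∈ range ν.len, ∑ γ ∈ range (ν.part ρ), q⁻¹ ^ γ * t⁻¹ ^ ρ *
          ((1 - q) * ∑ c ∈ range (μ.part ρ), q ^ c * t ^ colHeight μ.part μ.len c) := by
  have hrow (r : ℕ) :
      ∑ c ∈ range (μ.part r),
          q ^ (c + 1) * q⁻¹ ^ ν.part r * (t ^ colHeight μ.part μ.len c * t⁻¹ ^ r) =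
        ∑ c ∈ range (μ.part r), q ^ (c + 1) * (t ^ colHeight μ.part μ.len c * t⁻¹ ^ r) +
          ∑ γ ∈ range (ν.part r), q⁻¹ ^ γ * t⁻¹ ^ r *
            ((1 - q) * ∑ c ∈ range (μ.part r), q ^ c * t ^ colHeight μ.part μ.len c) := by
    set S := ∑ c ∈ range (μ.part r), q ^ c * t ^ colHeight μ.part μ.len c
    rw [← sum_mul, ← sum_mul]
    have h₁ : ∑ c ∈ range (μ.part r),
        q ^ (c + 1) * q⁻¹ ^ ν.part r * (t ^ colHeight μ.part μ.len c * t⁻¹ ^ r) =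
          q * q⁻¹ ^ ν.part r * t⁻¹ ^ r * S := by
      rw [mul_sum]; exact sum_congr rfl fun c _ => by ring
    have h₂ : ∑ c ∈ range (μ.part r), q ^ (c + 1) * (t ^ colHeight μ.part μ.len c * t⁻¹ ^ r) =
        q * t⁻¹ ^ r * S := by
      rw [mul_sum]; exact sum_congr rfl fun c _ => by ring
    rw [h₁, h₂]
    linear_combination (-(t⁻¹ ^ r * S)) * one_sub_mul_geom_sum_inv hq (ν.part r)
  have hμ : μ.len ≤ μ.len + ν.len := le_self_add
  rw [← μ.sum_rows_of_len_le hμ, q_mul_t_mul_Bfun ht, ← μ.sum_rows_of_len_le hμ,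
    ← ν.sum_rows_of_len_le (le_add_self : ν.len ≤ μ.len + ν.len), ← sum_add_distrib]
  exact sum_congr rfl fun r _ => hrow r

lemma Efun_snd_sum_eq (ht : t ≠ 0) (μ ν : YDPartition) :
    ∑ r ∈ range ν.len, ∑ c ∈ range (ν.part r),
        q ^ μ.part r * q⁻¹ ^ c * (t ^ (r + 1) * t⁻¹ ^ colHeight ν.part ν.len c) =
      ∑ ρ ∈ range ν.len, ∑ γ ∈ range (ν.part ρ), q⁻¹ ^ γ * t⁻¹ ^ ρ *
        (q ^ μ.part ρ * t ^ ρ + (1 - t) * ∑ r ∈ range ρ, q ^ μ.part r * t ^ r) := by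
  rw [ν.sum_rows_eq_sum_cols, ν.sum_rows_eq_sum_cols]
  refine sum_congr rfl fun γ _ => ?_
  calc _ = q⁻¹ ^ γ * (t * t⁻¹ ^ colHeight ν.part ν.len γ *
        ∑ ρ ∈ range (colHeight ν.part ν.len γ), q ^ μ.part ρ * t ^ ρ) := by
        rw [mul_sum, mul_sum]; exact sum_congr rfl fun ρ _ => by ring
    _ = _ := by
        rw [← sum_range_inv_pow_mul_add_partial_sum ht, mul_sum]
        exact sum_congr rfl fun ρ _ => by ring

lemma Efun_eq_add_sum_boundaryWeight (hq : q ≠ 0) (ht : t ≠ 0) (μ ν : YDPartition) :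
    Efun q t μ.part μ.len ν.part ν.len = q * t * Bfun q t μ.part μ.len +
      ∑ ρ ∈ range ν.len, ∑ γ ∈ range (ν.part ρ), q⁻¹ ^ γ * t⁻¹ ^ ρ * boundaryWeight q t μ ρ := by
  rw [Efun_eq_sum_pow hq ht, Efun_fst_sum_eq hq ht, Efun_snd_sum_eq ht, add_assoc,
    ← sum_add_distrib]
  congr 1
  refine sum_congr rfl fun ρ _ => ?_
  rw [← sum_add_distrib]
  exact sum_congr rfl fun γ _ => by rw [boundaryWeight]; ring

end Efun

/-- `E_{μ,ν} = qt·B_μ + B_ν^* - (q-1)(t-1)·B_μ·B_ν^*`. -/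
theorem Efun_eq {K : Type*} [Field K] (q t : K) (hq : q ≠ 0) (ht : t ≠ 0)
    (μ ν : YDPartition) :
    Efun q t μ.part μ.len ν.part ν.len =
      q * t * Bfun q t μ.part μ.len + Bfun q⁻¹ t⁻¹ ν.part ν.len -
        (q - 1) * (t - 1) * Bfun q t μ.part μ.len * Bfun q⁻¹ t⁻¹ ν.part ν.len := by
  have hB : Bfun q⁻¹ t⁻¹ ν.part ν.len =
      ∑ ρ ∈ range ν.len, ∑ γ ∈ range (ν.part ρ), q⁻¹ ^ γ * t⁻¹ ^ ρ := by
    simp only [Bfun, zpow_natCast]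
  rw [Efun_eq_add_sum_boundaryWeight hq ht, hB]
  simp_rw [boundaryWeight_eq, ← sum_mul]
  ring
end

section
/- For any partition μ, with z_i(μ) = t^{-l(μ)+i} q^{μ_i}, one has (1-t)·Σ_{1≤i<j≤l(μ)} z_i(μ)/z_j(μ) = (q^{-1}-1)·Σ_{□∈μ} q^{a_μ(□)+1} t^{-l_μ(□)} + Σ_{i=1}^{l(μ)} (z_i(μ) - 1). -/
open Finset

/-!
Induct on the number `l` of rows, for an arbitrary weakly decreasing `p` (only the first `l`
rows count). Appending a row of length `m = p l` adds cells of leg `0` and raises by one the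
leg of every cell in the first `m` columns; it also divides every `z_i` by `t`. Summing the
geometric series `(q⁻¹ - 1) ∑_{c < m} q ^ (p i - c) = q ^ (p i - m) - q ^ (p i)`, the
right-hand side grows by `(1 - t) ∑_{i < l} z_i / z_l`, the new part of the left-hand side.
-/

lemma inv_sub_one_mul_sum_range_zpow {K : Type*} [Field K] {q : K} (hq : q ≠ 0) (e : ℤ)
    (n : ℕ) :
    (q⁻¹ - 1) * ∑ c ∈ range n, q ^ (e - c) = q ^ (e - n) - q ^ e := by
  have step (c : ℕ) : (q⁻¹ - 1) * q ^ (e - c) = q ^ (e - ↑(c + 1)) - q ^ (e - c) := by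
    rw [Nat.cast_succ, ← sub_sub, zpow_sub_one₀ hq]
    ring
  rw [mul_sum, sum_congr rfl fun c _ => step c, sum_range_sub (fun c : ℕ => q ^ (e - c))]
  simp

section colHeight

variable {p : ℕ → ℕ} {l c : ℕ}

lemma colHeight_eq_of_lt (hp : Antitone p) {k : ℕ} (hc : c < p k) (hl : l ≤ k + 1) :
    colHeight p l c = l := by
  rw [colHeight, filter_true_of_mem, card_range]
  intro r hr
  exact hc.trans_le (hp (by simp at hr; omega))

lemma colHeight_succ_of_le (hc : p l ≤ c) : colHeight p (l + 1) c = colHeight p l c := by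
  rw [colHeight, colHeight, range_add_one, filter_insert, if_neg hc.not_gt]

end colHeight

section armLegSum

variable {K : Type*} [Field K] (q t : K) (p : ℕ → ℕ)

def armLegSum (l : ℕ) : K :=
  ∑ r ∈ range l, ∑ c ∈ range (p r), q ^ (armZ p r c + 1) * t ^ (-(legZ p l r c))

variable {p}

lemma armZ_add_one (r c : ℕ) : armZ p r c + 1 = (p r : ℤ) - c := by
  rw [armZ]; ring

lemma neg_legZ (l r c : ℕ) : -legZ p l r c = (r : ℤ) + 1 - colHeight p l c := by
  rw [legZ]; ring

lemma neg_legZ_succ_of_lt (hp : Antitone p) {l c : ℕ} (hc : c < p l) (r : ℕ) :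
    -legZ p (l + 1) r c = (r : ℤ) - l := by
  rw [neg_legZ, colHeight_eq_of_lt hp hc le_rfl]; push_cast; ring

lemma sum_row_legZ_succ (hp : Antitone p) {l r : ℕ} (hr : r < l) :
    ∑ c ∈ range (p r), q ^ (armZ p r c + 1) * t ^ (-legZ p (l + 1) r c) =
      ∑ c ∈ range (p r), q ^ (armZ p r c + 1) * t ^ (-legZ p l r c) +
        (t ^ ((r : ℤ) - l) - t ^ ((r : ℤ) + 1 - l)) *
          ∑ c ∈ range (p l), q ^ ((p r : ℤ) - c) := by
  have hle : p l ≤ p r := hp hr.le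
  rw [← sum_range_add_sum_Ico _ hle, ← sum_range_add_sum_Ico _ hle, mul_sum]
  have lower : ∀ c ∈ range (p l), q ^ (armZ p r c + 1) * t ^ (-legZ p (l + 1) r c) =
      q ^ (armZ p r c + 1) * t ^ (-legZ p l r c) +
        (t ^ ((r : ℤ) - l) - t ^ ((r : ℤ) + 1 - l)) * q ^ ((p r : ℤ) - c) := fun c hc => by
    have hc := mem_range.1 hc
    rw [neg_legZ_succ_of_lt hp hc, neg_legZ, colHeight_eq_of_lt hp hc l.le_succ, armZ_add_one]
    ring
  have upper : ∀ c ∈ Ico (p l) (p r), q ^ (armZ p r c + 1) * t ^ (-legZ p (l + 1) r c) =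
      q ^ (armZ p r c + 1) * t ^ (-legZ p l r c) := fun c hc => by
    rw [legZ, legZ, colHeight_succ_of_le (mem_Ico.1 hc).1]
  rw [sum_congr rfl lower, sum_congr rfl upper, sum_add_distrib]
  ring

lemma armLegSum_succ (hp : Antitone p) (l : ℕ) :
    armLegSum q t p (l + 1) = armLegSum q t p l +
      ∑ r ∈ range l, (t ^ ((r : ℤ) - l) - t ^ ((r : ℤ) + 1 - l)) *
        ∑ c ∈ range (p l), q ^ ((p r : ℤ) - c) +
      ∑ c ∈ range (p l), q ^ ((p l : ℤ) - c) := by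
  have new_row : ∑ c ∈ range (p l), q ^ (armZ p l c + 1) * t ^ (-legZ p (l + 1) l c) =
      ∑ c ∈ range (p l), q ^ ((p l : ℤ) - c) := sum_congr rfl fun c hc => by
    rw [neg_legZ_succ_of_lt hp (mem_range.1 hc), sub_self, zpow_zero, mul_one, armZ_add_one]
  rw [armLegSum, sum_range_succ, new_row, sum_congr rfl fun r hr => sum_row_legZ_succ q t hp
    (mem_range.1 hr), sum_add_distrib, armLegSum]

end armLegSum

lemma one_sub_mul_sum_zpow_ratios {K : Type*} [Field K] {q t : K} (hq : q ≠ 0) (ht : t ≠ 0)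
    {p : ℕ → ℕ} (hp : Antitone p) (l : ℕ) :
    (1 - t) * ∑ j ∈ range l, ∑ i ∈ range j, t ^ ((i : ℤ) - j) * q ^ ((p i : ℤ) - p j) =
      (q⁻¹ - 1) * armLegSum q t p l +
        ∑ i ∈ range l, (t ^ ((i : ℤ) + 1 - l) * q ^ (p i : ℤ) - 1) := by
  induction l with
  | zero => simp [armLegSum]
  | succ l ih =>
    have hz (i : ℕ) : (i : ℤ) + 1 - ↑(l + 1) = i - l := by push_cast; ring
    have row_step (i : ℕ) :
        (1 - t) * (t ^ ((i : ℤ) - l) * q ^ ((p i : ℤ) - p l)) +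
            (t ^ ((i : ℤ) + 1 - l) * q ^ (p i : ℤ) - 1) =
          (q⁻¹ - 1) * ((t ^ ((i : ℤ) - l) - t ^ ((i : ℤ) + 1 - l)) *
              ∑ c ∈ range (p l), q ^ ((p i : ℤ) - c)) +
            (t ^ ((i : ℤ) + 1 - ↑(l + 1)) * q ^ (p i : ℤ) - 1) := by
      have hshift : t ^ ((i : ℤ) + 1 - l) = t ^ ((i : ℤ) - l) * t := by
        rw [← zpow_add_one₀ ht]; ring_nf
      rw [hz, hshift]
      linear_combination (t * t ^ ((i : ℤ) - l) - t ^ ((i : ℤ) - l)) *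
        inv_sub_one_mul_sum_range_zpow hq (p i) (p l)
    have rows := sum_congr rfl fun i (_ : i ∈ range l) => row_step i
    rw [sum_add_distrib, sum_add_distrib, ← mul_sum, ← mul_sum] at rows
    have new_cells := inv_sub_one_mul_sum_range_zpow hq (p l) (p l)
    rw [sub_self, zpow_zero] at new_cells
    rw [sum_range_succ, mul_add, ih, armLegSum_succ q t hp, sum_range_succ _ l, hz, sub_self,
      zpow_zero]
    linear_combination rows - new_cells

/-- with `z_i(μ) = t^{-l(μ)+i} q^{μ_i}` (1-based `i`; 0-based below),
`(1-t)·Σ_{i<j} z_i(μ)/z_j(μ)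
  = (q⁻¹-1)·Σ_{□∈μ} q^{a_μ(□)+1} t^{-l_μ(□)} + Σ_{i=1}^{l(μ)} (z_i(μ) - 1)`. -/
theorem one_sub_t_sum_ratios {K : Type*} [Field K] (q t : K) (hq : q ≠ 0) (ht : t ≠ 0)
    (μ : YDPartition) :
    (1 - t) * ∑ j ∈ range μ.len, ∑ i ∈ range j,
        (t ^ ((i : ℤ) + 1 - μ.len) * q ^ (μ.part i : ℤ)) /
          (t ^ ((j : ℤ) + 1 - μ.len) * q ^ (μ.part j : ℤ)) =
      (q⁻¹ - 1) * (∑ r ∈ range μ.len, ∑ c ∈ range (μ.part r),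
          q ^ (armZ μ.part r c + 1) * t ^ (-(legZ μ.part μ.len r c))) +
        ∑ i ∈ range μ.len, (t ^ ((i : ℤ) + 1 - μ.len) * q ^ (μ.part i : ℤ) - 1) := by
  have ratio (i j : ℕ) :
      t ^ ((i : ℤ) + 1 - μ.len) * q ^ (μ.part i : ℤ) /
          (t ^ ((j : ℤ) + 1 - μ.len) * q ^ (μ.part j : ℤ)) =
        t ^ ((i : ℤ) - j) * q ^ ((μ.part i : ℤ) - μ.part j) := by
    rw [mul_div_mul_comm, ← zpow_sub₀ ht, ← zpow_sub₀ hq]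
    ring_nf
  simp only [ratio]
  exact one_sub_mul_sum_zpow_ratios hq ht μ.antitone μ.len
end

section
/- For any partition μ, with z_i(μ) = t^{-l(μ)+i} q^{μ_i}, the following identity of rational functions in q, t, u holds: ∏_{1≤i<j≤l(μ)} (1 - t u z_i(μ)/z_j(μ))/(1 - u z_i(μ)/z_j(μ)) = ∏_{□∈μ} (1 - u q^{a_μ(□)+1} t^{-l_μ(□)})/(1 - u q^{a_μ(□)} t^{-l_μ(□)}) · ∏_{i=1}^{l(μ)} (1-u)/(1 - u z_i(μ)). -/
open Finset

/-- The field of rational functions `ℚ(q, t, u)`. -/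
noncomputable abbrev K3 : Type := FractionRing (MvPolynomial (Fin 3) ℚ)

noncomputable def qv : K3 := algebraMap (MvPolynomial (Fin 3) ℚ) K3 (MvPolynomial.X 0)
noncomputable def tv : K3 := algebraMap (MvPolynomial (Fin 3) ℚ) K3 (MvPolynomial.X 1)
noncomputable def uv : K3 := algebraMap (MvPolynomial (Fin 3) ℚ) K3 (MvPolynomial.X 2)

/-! Both sides factor over the rows `r` of `μ`. In row `r` the cells whose column has height `k`
form the interval `[μ_{k+1}, μ_k)` (0-based: `[p k, p (k - 1))`), with leg `k - 1 - r`, so their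
factors telescope to one ratio. The product of these ratios over `k`, multiplied by
`(1 - u) / (1 - u z_r)`, loses its first denominator and last numerator and, after shifting the
denominators by one, becomes `∏_{j > r} (1 - t u z_r / z_j) / (1 - u z_r / z_j)`. -/

section ColumnHeight

variable {p : ℕ → ℕ} {l : ℕ}

lemma colHeight_le (c : ℕ) : colHeight p l c ≤ l :=
  (card_filter_le _ _).trans_eq (card_range l)

lemma lt_colHeight_iff (hp : Antitone p) (hl : p l = 0) {c k : ℕ} :
    k < colHeight p l c ↔ c < p k := by
  constructor
  · intro hk
    by_contra! hc
    have : (range l).filter (fun r => c < p r) ⊆ range k := fun i hi => by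
      simp only [mem_filter, mem_range] at hi ⊢
      by_contra! hki
      exact (hp hki).not_gt (hc.trans_lt hi.2)
    exact hk.not_ge ((card_le_card this).trans_eq (card_range k))
  · intro hc
    have hkl : k < l := by
      by_contra! hlk
      exact (hc.trans_le ((hp hlk).trans_eq hl)).not_ge c.zero_le
    have : range (k + 1) ⊆ (range l).filter (fun r => c < p r) := fun i hi => by
      simp only [mem_filter, mem_range] at hi ⊢
      exact ⟨by omega, hc.trans_le (hp (by omega))⟩
    exact (card_range (k + 1)).symm.trans_le (card_le_card this)

lemma colHeight_eq_iff (hp : Antitone p) (hl : p l = 0) {c k : ℕ} (hk : 1 ≤ k) :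
    colHeight p l c = k ↔ p k ≤ c ∧ c < p (k - 1) := by
  rw [← not_lt, ← lt_colHeight_iff hp hl, ← lt_colHeight_iff hp hl]
  omega

end ColumnHeight

section TelescopingProducts

variable {G₀ : Type*} [CommGroupWithZero G₀]

lemma Finset.prod_Ico_div_succ_of_ne_zero {f : ℕ → G₀} (hf : ∀ n, f n ≠ 0) {m n : ℕ}
    (hmn : m ≤ n) : ∏ i ∈ Ico m n, f i / f (i + 1) = f m / f n := by
  simpa only [Units.coe_prod, Units.val_div_eq_div_val, Units.val_inv_eq_inv_val, Units.val_mk0,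
    inv_div_inv] using
    congrArg Units.val (prod_Ico_div (fun i => (Units.mk0 (f i) (hf i))⁻¹) hmn)

lemma Finset.prod_Ico_succ_div_mul_div {f g : ℕ → G₀} {a b : ℕ} (hab : a ≤ b) (hf : f b ≠ 0)
    (hg : g a ≠ 0) :
    (∏ k ∈ Ico a (b + 1), f k / g k) * (g a / f b) = ∏ k ∈ Ico a b, f k / g (k + 1) := by
  rw [prod_div_distrib, prod_div_distrib, prod_Ico_succ_top hab,
    prod_eq_prod_Ico_succ_bot (Nat.lt_succ_of_le hab) g, ← prod_Ico_add' g a b 1]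
  field_simp

end TelescopingProducts

section ArmLegProduct

variable {K : Type*} [Field K] {q t u : K} {p : ℕ → ℕ} {l : ℕ}

lemma prod_row_cells_eq_prod_colHeight (hp : Antitone p) (hl : p l = 0)
    (hu : ∀ a b : ℤ, 1 - u * q ^ a * t ^ b ≠ 0) (r : ℕ) :
    ∏ c ∈ range (p r), (1 - u * q ^ (armZ p r c + 1) * t ^ (-legZ p l r c)) /
        (1 - u * q ^ armZ p r c * t ^ (-legZ p l r c)) =
      ∏ k ∈ Ico (r + 1) (l + 1), (1 - u * q ^ ((p r : ℤ) - p k) * t ^ ((r : ℤ) + 1 - k)) /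
        (1 - u * q ^ ((p r : ℤ) - p (k - 1)) * t ^ ((r : ℤ) + 1 - k)) := by
  have hcol : ∀ c ∈ range (p r), colHeight p l c ∈ Ico (r + 1) (l + 1) := fun c hc =>
    mem_Ico.2 ⟨(lt_colHeight_iff hp hl).2 (mem_range.1 hc), Nat.lt_succ_of_le (colHeight_le c)⟩
  rw [← prod_fiberwise_of_maps_to hcol]
  refine prod_congr rfl fun k hk => ?_
  obtain ⟨hrk, hkl⟩ := mem_Ico.1 hk
  have hfiber : (range (p r)).filter (fun c => colHeight p l c = k) = Ico (p k) (p (k - 1)) := by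
    ext c
    simp only [mem_filter, mem_range, mem_Ico, colHeight_eq_iff hp hl (by omega : 1 ≤ k)]
    exact ⟨And.right, fun h => ⟨h.2.trans_le (hp (by omega)), h⟩⟩
  set f : ℕ → K := fun c => 1 - u * q ^ ((p r : ℤ) - c) * t ^ ((r : ℤ) + 1 - k)
  calc _ = ∏ c ∈ Ico (p k) (p (k - 1)), f c / f (c + 1) := by
        rw [hfiber]
        refine prod_congr rfl fun c hc => ?_
        have hck := (colHeight_eq_iff hp hl (by omega : 1 ≤ k)).2 (mem_Ico.1 hc)
        have harm : armZ p r c = (p r : ℤ) - (c + 1 : ℕ) := by rw [armZ]; push_cast; ring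
        have hleg : -legZ p l r c = (r : ℤ) + 1 - k := by rw [legZ, hck]; ring
        rw [harm, hleg, show (p r : ℤ) - (c + 1 : ℕ) + 1 = p r - c by push_cast; ring]
    _ = _ := prod_Ico_div_succ_of_ne_zero (fun c => hu _ _) (hp (Nat.sub_le k 1))

lemma prod_row_cells_mul_eq_prod_pairs (hp : Antitone p) (hl : p l = 0)
    (hu : ∀ a b : ℤ, 1 - u * q ^ a * t ^ b ≠ 0) {r : ℕ} (hr : r < l) :
    (∏ c ∈ range (p r), (1 - u * q ^ (armZ p r c + 1) * t ^ (-legZ p l r c)) /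
        (1 - u * q ^ armZ p r c * t ^ (-legZ p l r c))) *
        ((1 - u) / (1 - u * (t ^ ((r : ℤ) + 1 - l) * q ^ (p r : ℤ)))) =
      ∏ j ∈ Ico (r + 1) l, (1 - u * q ^ ((p r : ℤ) - p j) * t ^ ((r : ℤ) + 1 - j)) /
        (1 - u * q ^ ((p r : ℤ) - p j) * t ^ ((r : ℤ) - j)) := by
  have hfirst :
      1 - u = 1 - u * q ^ ((p r : ℤ) - p (r + 1 - 1)) * t ^ ((r : ℤ) + 1 - (r + 1 : ℕ)) := by
    simp
  have hlast : 1 - u * (t ^ ((r : ℤ) + 1 - l) * q ^ (p r : ℤ)) =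
      1 - u * q ^ ((p r : ℤ) - p l) * t ^ ((r : ℤ) + 1 - l) := by
    rw [hl, Nat.cast_zero, sub_zero, mul_comm (t ^ _), mul_assoc]
  rw [prod_row_cells_eq_prod_colHeight hp hl hu, hfirst, hlast,
    prod_Ico_succ_div_mul_div hr (hu _ _) (hu _ _)]
  simp only [Nat.add_sub_cancel, Nat.cast_add, Nat.cast_one, add_sub_add_right_eq_sub]

lemma zpow_mul_zpow_div_zpow_mul_zpow (hq : q ≠ 0) (ht : t ≠ 0) (i j : ℕ) :
    (t ^ ((i : ℤ) + 1 - l) * q ^ (p i : ℤ)) / (t ^ ((j : ℤ) + 1 - l) * q ^ (p j : ℤ)) =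
      q ^ ((p i : ℤ) - p j) * t ^ ((i : ℤ) - j) := by
  rw [mul_div_mul_comm, ← zpow_sub₀ ht, ← zpow_sub₀ hq, mul_comm]
  congr 2
  ring

theorem prod_arms_legs_of_ne_zero (hq : q ≠ 0) (ht : t ≠ 0)
    (hu : ∀ a b : ℤ, 1 - u * q ^ a * t ^ b ≠ 0) (hp : Antitone p) (hl : p l = 0) :
    (∏ j ∈ range l, ∏ i ∈ range j,
        (1 - t * u * ((t ^ ((i : ℤ) + 1 - l) * q ^ (p i : ℤ)) /
            (t ^ ((j : ℤ) + 1 - l) * q ^ (p j : ℤ)))) /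
          (1 - u * ((t ^ ((i : ℤ) + 1 - l) * q ^ (p i : ℤ)) /
            (t ^ ((j : ℤ) + 1 - l) * q ^ (p j : ℤ))))) =
      (∏ r ∈ range l, ∏ c ∈ range (p r),
          (1 - u * q ^ (armZ p r c + 1) * t ^ (-(legZ p l r c))) /
            (1 - u * q ^ (armZ p r c) * t ^ (-(legZ p l r c)))) *
        ∏ i ∈ range l, (1 - u) / (1 - u * (t ^ ((i : ℤ) + 1 - l) * q ^ (p i : ℤ))) := by
  have hpair : ∀ i j : ℕ,
      (1 - t * u * ((t ^ ((i : ℤ) + 1 - l) * q ^ (p i : ℤ)) /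
          (t ^ ((j : ℤ) + 1 - l) * q ^ (p j : ℤ)))) /
        (1 - u * ((t ^ ((i : ℤ) + 1 - l) * q ^ (p i : ℤ)) /
          (t ^ ((j : ℤ) + 1 - l) * q ^ (p j : ℤ)))) =
      (1 - u * q ^ ((p i : ℤ) - p j) * t ^ ((i : ℤ) + 1 - j)) /
        (1 - u * q ^ ((p i : ℤ) - p j) * t ^ ((i : ℤ) - j)) := fun i j => by
    rw [zpow_mul_zpow_div_zpow_mul_zpow hq ht, add_sub_right_comm, zpow_add_one₀ ht]
    ring
  simp only [hpair]
  rw [prod_comm' (t' := range l) (s' := fun i => Ico (i + 1) l)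
    (fun j i => by simp only [mem_range, mem_Ico]; omega), ← prod_mul_distrib]
  exact prod_congr rfl fun r hr =>
    (prod_row_cells_mul_eq_prod_pairs hp hl hu (mem_range.1 hr)).symm

end ArmLegProduct

section RationalFunctions

open MvPolynomial

lemma qv_ne_zero : qv ≠ 0 := by simp [qv, X_ne_zero]

lemma tv_ne_zero : tv ≠ 0 := by simp [tv, X_ne_zero]

lemma one_sub_uv_mul_qv_zpow_mul_tv_zpow_ne_zero (a b : ℤ) : 1 - uv * qv ^ a * tv ^ b ≠ 0 := by
  obtain ⟨m, m', rfl⟩ : ∃ m m' : ℕ, a = m - m' := ⟨a.toNat, (-a).toNat, by omega⟩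
  obtain ⟨n, n', rfl⟩ : ∃ n n' : ℕ, b = n - n' := ⟨b.toNat, (-b).toNat, by omega⟩
  intro h
  have hK : uv * qv ^ m * tv ^ n = qv ^ m' * tv ^ n' := by
    rw [zpow_sub₀ qv_ne_zero, zpow_sub₀ tv_ne_zero] at h
    simp only [zpow_natCast] at h
    field_simp [qv_ne_zero, tv_ne_zero] at h
    linear_combination -h
  have hpoly : (X 2 * X 0 ^ m * X 1 ^ n : MvPolynomial (Fin 3) ℚ) = X 0 ^ m' * X 1 ^ n' :=
    IsFractionRing.injective (MvPolynomial (Fin 3) ℚ) K3 (by simpa [qv, tv, uv] using hK)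
  simpa using congrArg (eval ![1, 1, 0]) hpoly

end RationalFunctions

/-- with `z_i(μ) = t^{-l(μ)+i} q^{μ_i}` (1-based `i`; 0-based below),
in `ℚ(q,t,u)`:
`∏_{i<j} (1 - tu·z_i/z_j)/(1 - u·z_i/z_j)
 = ∏_{□∈μ} (1 - u q^{a(□)+1} t^{-l(□)})/(1 - u q^{a(□)} t^{-l(□)})
   · ∏_i (1-u)/(1 - u z_i(μ))`. -/
theorem product_arms_legs (μ : YDPartition) :
    (∏ j ∈ range μ.len, ∏ i ∈ range j,
        (1 - tv * uv * ((tv ^ ((i : ℤ) + 1 - μ.len) * qv ^ (μ.part i : ℤ)) /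
            (tv ^ ((j : ℤ) + 1 - μ.len) * qv ^ (μ.part j : ℤ)))) /
          (1 - uv * ((tv ^ ((i : ℤ) + 1 - μ.len) * qv ^ (μ.part i : ℤ)) /
            (tv ^ ((j : ℤ) + 1 - μ.len) * qv ^ (μ.part j : ℤ))))) =
      (∏ r ∈ range μ.len, ∏ c ∈ range (μ.part r),
          (1 - uv * qv ^ (armZ μ.part r c + 1) * tv ^ (-(legZ μ.part μ.len r c))) /
            (1 - uv * qv ^ (armZ μ.part r c) * tv ^ (-(legZ μ.part μ.len r c)))) *
        ∏ i ∈ range μ.len,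
          (1 - uv) / (1 - uv * (tv ^ ((i : ℤ) + 1 - μ.len) * qv ^ (μ.part i : ℤ))) := by
  obtain ⟨p, l, hp, hpos⟩ := μ
  exact prod_arms_legs_of_ne_zero qv_ne_zero tv_ne_zero
    one_sub_uv_mul_qv_zpow_mul_tv_zpow_ne_zero hp
    (Nat.eq_zero_of_not_pos fun h => lt_irrefl l ((hpos l).2 h))
end

section
/- Fix g ≥ 1 and let P(x) = ∏_{k=1}^g (1 - α_k^{-1} x). For n ≥ 0 define the rational function f(z_1,…,z_n) = ∏_{i=1}^n (P(1)/P(z_i)) · Σ_{σ∈S_n} σ{ ∏_{i>j} [1/(1 - z_i/z_j) · ∏_{k=1}^g (1 - α_k^{-1} z_i/z_j)/(1 - q α_k^{-1} z_i/z_j)] · ∏_{i>j+1} (1 - q z_i/z_j) · ∏_{i≥2} (1 - z_i) }, where σ acts by permuting the variables z_1,…,z_n. Then f(1, z_1, …, z_n) = f(q z_1, …, q z_n). -/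
open Finset

/-- `P(x) = ∏_{k=1}^g (1 - α_k⁻¹ x)`. -/
noncomputable def Pfun {K : Type*} [Field K] {g : ℕ} (α : Fin g → K) (x : K) : K :=
  ∏ k, (1 - (α k)⁻¹ * x)

/-- The symmetrized rational function
`f(z_1,…,z_n) = ∏_i P(1)/P(z_i) · Σ_{σ∈S_n} σ{ ∏_{i>j} [1/(1-z_i/z_j) ·
  ∏_k (1-α_k⁻¹ z_i/z_j)/(1-q α_k⁻¹ z_i/z_j)] · ∏_{i>j+1}(1-q z_i/z_j) · ∏_{i≥2}(1-z_i) }`. -/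
noncomputable def ffun {K : Type*} [Field K] {g : ℕ} (q : K) (α : Fin g → K)
    {n : ℕ} (z : Fin n → K) : K :=
  (∏ i, Pfun α 1 / Pfun α (z i)) *
    ∑ σ : Equiv.Perm (Fin n),
      (∏ p ∈ Finset.univ.filter (fun p : Fin n × Fin n => p.2 < p.1),
          ((1 - z (σ p.1) / z (σ p.2))⁻¹ *
            ∏ k, (1 - (α k)⁻¹ * (z (σ p.1) / z (σ p.2))) /
              (1 - q * (α k)⁻¹ * (z (σ p.1) / z (σ p.2))))) *
        (∏ p ∈ Finset.univ.filter (fun p : Fin n × Fin n => (p.2 : ℕ) + 1 < (p.1 : ℕ)),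
          (1 - q * (z (σ p.1) / z (σ p.2)))) *
        ∏ i ∈ Finset.univ.filter (fun i : Fin n => 0 < (i : ℕ)), (1 - z (σ i))

/-- The field of rational functions `ℚ(q, α_1, …, α_g, z_1, …, z_n)`. -/
noncomputable abbrev KF (g n : ℕ) : Type :=
  FractionRing (MvPolynomial (Option (Fin g ⊕ Fin n)) ℚ)

noncomputable def qV (g n : ℕ) : KF g n :=
  algebraMap (MvPolynomial (Option (Fin g ⊕ Fin n)) ℚ) (KF g n) (MvPolynomial.X none)

noncomputable def αV (g n : ℕ) (k : Fin g) : KF g n :=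
  algebraMap (MvPolynomial (Option (Fin g ⊕ Fin n)) ℚ) (KF g n)
    (MvPolynomial.X (some (Sum.inl k)))

noncomputable def zV (g n : ℕ) (i : Fin n) : KF g n :=
  algebraMap (MvPolynomial (Option (Fin g ⊕ Fin n)) ℚ) (KF g n)
    (MvPolynomial.X (some (Sum.inr i)))

/-!
In `f(1, z_1, …, z_n)` only the permutations keeping the variable `1` in front contribute: for all
others the factor `∏_{i≥2} (1 - z_{σ i})` contains `1 - 1`. In a remaining summand the pairs not
involving `1` give the same factors as the matching summand of `f(q z)`, since the ratios `z_i/z_j`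
are invariant under scaling; the pairs involving `1`, together with the last product, give
`∏_i P(z_i)/P(q z_i)` times the factors `1 - q z_{σ i}` that the summand of `f(q z)` has in place of
`1 - z_{σ i}`. That extra factor turns the prefactor `∏ P(1)/P(z_i)` into `∏ P(1)/P(q z_i)`.
-/

section FinProd

variable {M : Type*} [CommMonoid M] {n : ℕ}

theorem Fin.prod_filter_snd_lt_fst_succ (f : Fin (n + 1) × Fin (n + 1) → M) :
    ∏ p ∈ univ.filter (fun p : Fin (n + 1) × Fin (n + 1) => p.2 < p.1), f p =
      (∏ i : Fin n, f (i.succ, 0)) *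
        ∏ p ∈ univ.filter (fun p : Fin n × Fin n => p.2 < p.1), f (p.1.succ, p.2.succ) := by
  rw [prod_filter, prod_filter, Fintype.prod_prod_type, Fintype.prod_prod_type]
  simp [Fin.prod_univ_succ, Fin.succ_lt_succ_iff, prod_mul_distrib]

theorem Fin.prod_filter_snd_add_one_lt_fst_succ (f : Fin (n + 1) × Fin (n + 1) → M) :
    ∏ p ∈ univ.filter (fun p : Fin (n + 1) × Fin (n + 1) => (p.2 : ℕ) + 1 < p.1), f p =
      (∏ i ∈ univ.filter (fun i : Fin n => 0 < (i : ℕ)), f (i.succ, 0)) *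
        ∏ p ∈ univ.filter (fun p : Fin n × Fin n => (p.2 : ℕ) + 1 < p.1),
          f (p.1.succ, p.2.succ) := by
  rw [prod_filter, prod_filter, prod_filter, Fintype.prod_prod_type, Fintype.prod_prod_type]
  simp [Fin.prod_univ_succ, ← prod_mul_distrib, ite_mul]

theorem Fin.prod_filter_val_pos_succ (f : Fin (n + 1) → M) :
    ∏ i ∈ univ.filter (fun i : Fin (n + 1) => 0 < (i : ℕ)), f i =
      ∏ i : Fin n, f i.succ := by
  simp [prod_filter, Fin.prod_univ_succ]

end FinProd

section Field

variable {K : Type*} [Field K] {g n : ℕ}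

theorem Pfun_ne_zero {α : Fin g → K} {x : K} (hα : ∀ k, α k ≠ 0) (hx : ∀ k, x ≠ α k) :
    Pfun α x ≠ 0 :=
  prod_ne_zero_iff.mpr fun k _ h => hx k <| by
    rw [sub_eq_zero, eq_comm, inv_mul_eq_one₀ (hα k)] at h
    exact h.symm

theorem prod_div_eq_Pfun_div (q : K) (α : Fin g → K) (x : K) :
    ∏ k, (1 - (α k)⁻¹ * x) / (1 - q * (α k)⁻¹ * x) = Pfun α x / Pfun α (q * x) := by
  rw [prod_div_distrib, Pfun, Pfun]
  congr 1
  exact prod_congr rfl fun k _ => by ring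

noncomputable def ffunTerm (q : K) (α : Fin g → K) (w : Fin n → K) : K :=
  (∏ p ∈ univ.filter (fun p : Fin n × Fin n => p.2 < p.1),
      ((1 - w p.1 / w p.2)⁻¹ *
        ∏ k, (1 - (α k)⁻¹ * (w p.1 / w p.2)) / (1 - q * (α k)⁻¹ * (w p.1 / w p.2)))) *
    (∏ p ∈ univ.filter (fun p : Fin n × Fin n => (p.2 : ℕ) + 1 < (p.1 : ℕ)),
      (1 - q * (w p.1 / w p.2))) *
    ∏ i ∈ univ.filter (fun i : Fin n => 0 < (i : ℕ)), (1 - w i)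

theorem ffun_eq_sum_ffunTerm (q : K) (α : Fin g → K) (z : Fin n → K) :
    ffun q α z =
      (∏ i, Pfun α 1 / Pfun α (z i)) * ∑ σ : Equiv.Perm (Fin n), ffunTerm q α (z ∘ σ) :=
  rfl

theorem ffunTerm_eq_zero_of_eq_one {q : K} {α : Fin g → K} {w : Fin n → K} {i : Fin n}
    (hi : 0 < (i : ℕ)) (hw : w i = 1) : ffunTerm q α w = 0 :=
  mul_eq_zero_of_right _ <|
    prod_eq_zero (mem_filter.mpr ⟨mem_univ i, hi⟩) (by rw [hw, sub_self])

theorem ffunTerm_cons_one {q : K} (α : Fin g → K) {w : Fin n → K} (hq : q ≠ 0)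
    (hw : ∀ i, 1 - w i ≠ 0) :
    ffunTerm q α (Fin.cons 1 w) =
      (∏ i, Pfun α (w i) / Pfun α (q * w i)) * ffunTerm q α (fun i => q * w i) := by
  have hprod : ∏ i, (1 - w i) ≠ 0 := prod_ne_zero_iff.mpr fun i _ => hw i
  unfold ffunTerm
  rw [Fin.prod_filter_snd_lt_fst_succ, Fin.prod_filter_snd_add_one_lt_fst_succ,
    Fin.prod_filter_val_pos_succ]
  simp only [Fin.cons_zero, Fin.cons_succ, div_one, mul_div_mul_left _ _ hq, prod_div_eq_Pfun_div,
    prod_mul_distrib, prod_inv_distrib]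
  field_simp

theorem Fin.cons_comp_decomposeFin_symm_zero {α : Type*} (x : α) (w : Fin n → α)
    (e : Equiv.Perm (Fin n)) :
    Fin.cons x w ∘ Equiv.Perm.decomposeFin.symm (0, e) = Fin.cons x (w ∘ e) := by
  ext i
  cases i using Fin.cases <;>
    simp [Equiv.Perm.decomposeFin_symm_apply_zero, Equiv.Perm.decomposeFin_symm_apply_succ]

theorem sum_ffunTerm_cons_one {q : K} (α : Fin g → K) {z : Fin n → K} (hq : q ≠ 0)
    (hz : ∀ i, 1 - z i ≠ 0) :
    ∑ σ : Equiv.Perm (Fin (n + 1)), ffunTerm q α (Fin.cons 1 z ∘ σ) =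
      (∏ i, Pfun α (z i) / Pfun α (q * z i)) *
        ∑ σ : Equiv.Perm (Fin n), ffunTerm q α ((fun i => q * z i) ∘ σ) := by
  rw [← Equiv.sum_comp Equiv.Perm.decomposeFin.symm, Fintype.sum_prod_type,
    Fintype.sum_eq_single 0 ?vanish, mul_sum]
  case vanish =>
    intro p hp
    refine sum_eq_zero fun e _ => ?_
    set σ := Equiv.Perm.decomposeFin.symm (p, e)
    have hσ : σ⁻¹ 0 ≠ 0 := fun h => hp <|
      (Equiv.Perm.decomposeFin_symm_apply_zero p e).symm.trans (Equiv.Perm.inv_eq_iff_eq.mp h).symm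
    refine ffunTerm_eq_zero_of_eq_one (i := σ⁻¹ 0) (Fin.pos_iff_ne_zero.mpr hσ) ?_
    simp
  refine sum_congr rfl fun e _ => ?_
  rw [Fin.cons_comp_decomposeFin_symm_zero,
    ffunTerm_cons_one α (w := z ∘ e) hq fun i => hz (e i),
    ← Equiv.prod_comp e fun i => Pfun α (z i) / Pfun α (q * z i)]
  rfl

theorem ffun_cons_one_eq_ffun_const_mul {q : K} {α : Fin g → K} {z : Fin n → K} (hq : q ≠ 0)
    (hz : ∀ i, 1 - z i ≠ 0) (hP₁ : Pfun α 1 ≠ 0) (hP : ∀ i, Pfun α (z i) ≠ 0) :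
    ffun q α (Fin.cons 1 z) = ffun q α (fun i => q * z i) := by
  rw [ffun_eq_sum_ffunTerm, ffun_eq_sum_ffunTerm, sum_ffunTerm_cons_one α hq hz,
    Fin.prod_univ_succ, Fin.cons_zero, div_self hP₁, one_mul, ← mul_assoc, ← prod_mul_distrib]
  simp only [Fin.cons_succ, div_mul_div_cancel₀ (hP _)]

end Field

theorem MvPolynomial.algebraMap_ne_of_eval_ne {σ R K : Type*} [CommRing R] [CommRing K]
    [Algebra (MvPolynomial σ R) K] [IsFractionRing (MvPolynomial σ R) K] {f h : MvPolynomial σ R}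
    (v : σ → R) (hv : eval v f ≠ eval v h) : algebraMap _ K f ≠ algebraMap _ K h :=
  fun he => hv <| congrArg (eval v) (IsFractionRing.injective _ K he)

section RationalFunctionField

open MvPolynomial

variable (g n : ℕ)

theorem qV_ne_zero : qV g n ≠ 0 := by
  rw [qV, ← map_zero (algebraMap (MvPolynomial (Option (Fin g ⊕ Fin n)) ℚ) (KF g n))]
  exact algebraMap_ne_of_eval_ne (fun _ => 1) (by simp)

theorem αV_ne_zero (k : Fin g) : αV g n k ≠ 0 := by
  rw [αV, ← map_zero (algebraMap (MvPolynomial (Option (Fin g ⊕ Fin n)) ℚ) (KF g n))]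
  exact algebraMap_ne_of_eval_ne (fun _ => 1) (by simp)

theorem one_sub_zV_ne_zero (i : Fin n) : 1 - zV g n i ≠ 0 := by
  rw [sub_ne_zero, ← map_one (algebraMap (MvPolynomial (Option (Fin g ⊕ Fin n)) ℚ) (KF g n))]
  exact algebraMap_ne_of_eval_ne (fun _ => 0) (by simp)

theorem one_ne_αV (k : Fin g) : 1 ≠ αV g n k := by
  rw [← map_one (algebraMap (MvPolynomial (Option (Fin g ⊕ Fin n)) ℚ) (KF g n))]
  exact algebraMap_ne_of_eval_ne (fun _ => 0) (by simp)

theorem zV_ne_αV (i : Fin n) (k : Fin g) : zV g n i ≠ αV g n k :=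
  algebraMap_ne_of_eval_ne (fun s => if s = some (.inl k) then 1 else 0) (by simp)

end RationalFunctionField

theorem ffun_one_cons_general (g n : ℕ) :
    ffun (qV g n) (αV g n) (Fin.cons 1 (zV g n)) =
      ffun (qV g n) (αV g n) (fun i => qV g n * zV g n i) :=
  ffun_cons_one_eq_ffun_const_mul (qV_ne_zero g n) (one_sub_zV_ne_zero g n)
    (Pfun_ne_zero (αV_ne_zero g n) (one_ne_αV g n))
    fun i => Pfun_ne_zero (αV_ne_zero g n) (zV_ne_αV g n i)

/-- `f(1, z_1, …, z_n) = f(q z_1, …, q z_n)` in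
`ℚ(q, α_1, …, α_g, z_1, …, z_n)`, for `g ≥ 1`. -/
theorem ffun_one_cons (g n : ℕ) (hg : 1 ≤ g) :
    ffun (qV g n) (αV g n) (Fin.cons 1 (zV g n)) =
      ffun (qV g n) (αV g n) (fun i => qV g n * zV g n i) :=
  ffun_one_cons_general g n
end

section
/- Let μ be a partition with l(μ) parts and let L be the linear operator on ℤ[q^{±1}, t^{±1}] defined on monomials by L(t^i q^j) = t^i q^j if i ≤ 0 and L(t^i q^j) = 0 if i > 0. With z_i(μ) = t^{-l(μ)+i} q^{μ_i} and K̃_μ = (1-t)·Σ_{i,j=1}^{l(μ)} z_i(μ)/z_j(μ), one has L(K̃_μ) = (q^{-1}-1)·Σ_{□∈μ} q^{a_μ(□)+1} t^{-l_μ(□)} + Σ_{i=1}^{l(μ)} z_i(μ). -/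
open Finset

/-- The Laurent polynomial ring `ℤ[q^{±1}, t^{±1}]`, realized as the group algebra of
`ℤ × ℤ` over `ℤ`. -/
abbrev Lp : Type := AddMonoidAlgebra ℤ (ℤ × ℤ)

/-- The monomial `tⁱ qʲ`. -/
noncomputable def M (i j : ℤ) : Lp := AddMonoidAlgebra.single (i, j) 1

/-- The truncation operator `L(tⁱ qʲ) = tⁱ qʲ` if `i ≤ 0` and `0` otherwise. -/
noncomputable def Ltrunc (x : Lp) : Lp :=
  AddMonoidAlgebra.ofCoeff (Finsupp.filter (fun p : ℤ × ℤ => p.1 ≤ 0) x.coeff)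

/-!
Since `L` only sees the `t`-degree, `L(K̃_μ)` keeps, in row `i`, the terms `z_i/z_j` with `j ≥ i`
and the terms `t z_i/z_j` with `j > i`. On the other side, the cells of row `r` lying in a
column of height `k + 1` form the interval of columns `[μ_{k+1}, μ_k)`; on such a block the leg
is constant, so `(q⁻¹ - 1)` times the block telescopes in `q` to
`t^{r-k} (q^{μ_r - μ_k} - q^{μ_r - μ_{k+1}})`. Summing over `k ≥ r` gives the truncated row of
`K̃_μ`, except for the boundary term `k = l(μ) - 1`, which is `-z_r` because `μ_{l(μ)} = 0`.
-/

lemma M_mul (a b c d : ℤ) : M a b * M c d = M (a + c) (b + d) := by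
  simp [M, AddMonoidAlgebra.single_mul_single, Prod.mk_add_mk]

noncomputable def LtruncHom : Lp →+ Lp where
  toFun := Ltrunc
  map_zero' := congrArg AddMonoidAlgebra.ofCoeff (Finsupp.filter_zero _)
  map_add' x y := by
    rw [Ltrunc, Ltrunc, Ltrunc, AddMonoidAlgebra.coeff_add, Finsupp.filter_add,
      AddMonoidAlgebra.ofCoeff_add]

lemma coe_LtruncHom : ⇑LtruncHom = Ltrunc := rfl

lemma Ltrunc_M (a b : ℤ) : Ltrunc (M a b) = if a ≤ 0 then M a b else 0 := by
  unfold Ltrunc M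
  rw [AddMonoidAlgebra.coeff_single]
  split_ifs with h
  · exact congrArg AddMonoidAlgebra.ofCoeff (Finsupp.filter_single_of_pos _ h)
  · exact congrArg AddMonoidAlgebra.ofCoeff (Finsupp.filter_single_of_neg _ h)

lemma Ltrunc_one_sub_t_mul_sum (i l : ℕ) (e : ℕ → ℤ) :
    Ltrunc ((1 - M 1 0) * ∑ j ∈ range l, M ((i : ℤ) - j) (e j)) =
      ∑ j ∈ Ico i l, M ((i : ℤ) - j) (e j) - ∑ j ∈ Ico (i + 1) l, M ((i : ℤ) - j + 1) (e j) := by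
  rw [sub_mul, one_mul, mul_sum, ← coe_LtruncHom, map_sub, map_sum, map_sum]
  simp only [M_mul, zero_add, coe_LtruncHom, Ltrunc_M, ← sum_filter]
  congr 1 <;> refine sum_congr ?_ fun _ _ => by ring_nf
  all_goals ext j; simp only [mem_filter, mem_range, mem_Ico]; omega

lemma sum_Ico_M_sub_M (a A : ℤ) {m n : ℕ} (h : m ≤ n) :
    ∑ c ∈ Ico m n, (M a (A - c - 1) - M a (A - c)) = M a (A - n) - M a (A - m) := by
  rw [← sum_Ico_sub (fun c : ℕ => M a (A - c)) h]
  refine sum_congr rfl fun c _ => ?_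
  push_cast
  ring_nf

section Columns

variable {p : ℕ → ℕ} {l : ℕ}

lemma colHeight_eq_succ (hp : Antitone p) {k c : ℕ} (hk : k < l) (hc₁ : p (k + 1) ≤ c)
    (hc₂ : c < p k) : colHeight p l c = k + 1 := by
  have : (range l).filter (fun r => c < p r) = range (k + 1) := by
    ext i
    simp only [mem_filter, mem_range]
    constructor
    · rintro ⟨-, hci⟩
      by_contra hi
      have := hp (show k + 1 ≤ i by omega)
      omega
    · intro hi
      exact ⟨by omega, hc₂.trans_le (hp (by omega))⟩
  rw [colHeight, this, card_range]

lemma sum_range_eq_sum_Ico_column_blocks {G : Type*} [AddCommGroup G] (hp : Antitone p)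
    (hl : p l = 0) {r : ℕ} (hr : r ≤ l) (F : ℕ → G) :
    ∑ c ∈ range (p r), F c = ∑ k ∈ Ico r l, ∑ c ∈ Ico (p (k + 1)) (p k), F c := by
  have hblock : ∀ k, ∑ c ∈ Ico (p (k + 1)) (p k), F c =
      -((∑ c ∈ range (p (k + 1)), F c) - ∑ c ∈ range (p k), F c) := fun k => by
    rw [sum_Ico_eq_sub _ (hp k.le_succ), neg_sub]
  simp only [hblock, sum_neg_distrib, sum_Ico_sub (fun k => ∑ c ∈ range (p k), F c) hr, hl,
    range_zero, sum_empty, zero_sub, neg_neg]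

lemma q_inv_sub_one_mul_row (hp : Antitone p) (hl : p l = 0) {r : ℕ} (hr : r ≤ l) :
    (M 0 (-1) - 1) * ∑ c ∈ range (p r), M (-(legZ p l r c)) (armZ p r c + 1) =
      ∑ k ∈ Ico r l,
        (M ((r : ℤ) - k) ((p r : ℤ) - p k) - M ((r : ℤ) - k) ((p r : ℤ) - p (k + 1))) := by
  have hcell : ∀ c, (M 0 (-1) - 1) * M (-(legZ p l r c)) (armZ p r c + 1) =
      M ((r : ℤ) + 1 - colHeight p l c) ((p r : ℤ) - c - 1) -
        M ((r : ℤ) + 1 - colHeight p l c) ((p r : ℤ) - c) := fun c => by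
    rw [sub_mul, one_mul, M_mul, legZ, armZ]
    ring_nf
  rw [mul_sum, sum_range_eq_sum_Ico_column_blocks hp hl hr]
  refine sum_congr rfl fun k hk => ?_
  have hkl : k < l := (mem_Ico.mp hk).2
  have hblock : ∀ c ∈ Ico (p (k + 1)) (p k),
      (M 0 (-1) - 1) * M (-(legZ p l r c)) (armZ p r c + 1) =
        M ((r : ℤ) - k) ((p r : ℤ) - c - 1) - M ((r : ℤ) - k) ((p r : ℤ) - c) := fun c hc => by
    rw [hcell, colHeight_eq_succ hp hkl (mem_Ico.mp hc).1 (mem_Ico.mp hc).2]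
    push_cast
    ring_nf
  rw [sum_congr rfl hblock, sum_Ico_M_sub_M _ _ (hp k.le_succ)]

lemma Ltrunc_Ktilde_row (hp : Antitone p) (hl : p l = 0) {r : ℕ} (hr : r < l) :
    Ltrunc ((1 - M 1 0) * ∑ j ∈ range l, M ((r : ℤ) - j) ((p r : ℤ) - p j)) =
      (M 0 (-1) - 1) * ∑ c ∈ range (p r), M (-(legZ p l r c)) (armZ p r c + 1) +
        M ((r : ℤ) + 1 - l) (p r) := by
  have hshift : ∑ k ∈ Ico r l, M ((r : ℤ) - k) ((p r : ℤ) - p (k + 1)) =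
      ∑ j ∈ Ico (r + 1) l, M ((r : ℤ) - j + 1) ((p r : ℤ) - p j) +
        M ((r : ℤ) + 1 - l) (p r) := by
    have hlast : M ((r : ℤ) + 1 - l) (p r) = M ((r : ℤ) - l + 1) ((p r : ℤ) - p l) := by
      rw [hl]
      ring_nf
    rw [hlast, ← sum_Ico_succ_top (by omega : r + 1 ≤ l)
      (fun j : ℕ => M ((r : ℤ) - j + 1) ((p r : ℤ) - p j)), ← sum_Ico_add']
    refine sum_congr rfl fun k _ => ?_
    push_cast
    ring_nf
  rw [Ltrunc_one_sub_t_mul_sum, q_inv_sub_one_mul_row hp hl hr.le, sum_sub_distrib, hshift]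
  abel

end Columns

lemma YDPartition.part_len (μ : YDPartition) : μ.part μ.len = 0 :=
  Nat.eq_zero_of_not_pos fun h => lt_irrefl _ ((μ.pos_iff _).mpr h)

/-- with `z_i(μ) = t^{-l(μ)+i} q^{μ_i}` and
`K̃_μ = (1-t)·Σ_{i,j=1}^{l(μ)} z_i(μ)/z_j(μ)`, one has
`L(K̃_μ) = (q⁻¹-1)·Σ_{□∈μ} q^{a_μ(□)+1} t^{-l_μ(□)} + Σ_{i=1}^{l(μ)} z_i(μ)`
(note `z_i(μ)/z_j(μ) = t^{i-j} q^{μ_i-μ_j}`). -/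
theorem Ltrunc_Ktilde (μ : YDPartition) :
    Ltrunc ((1 - M 1 0) *
        ∑ i ∈ range μ.len, ∑ j ∈ range μ.len,
          M ((i : ℤ) - j) ((μ.part i : ℤ) - μ.part j)) =
      (M 0 (-1) - 1) *
          (∑ r ∈ range μ.len, ∑ c ∈ range (μ.part r),
            M (-(legZ μ.part μ.len r c)) (armZ μ.part r c + 1)) +
        ∑ i ∈ range μ.len, M ((i : ℤ) + 1 - μ.len) (μ.part i : ℤ) := by
  have hp : Antitone μ.part := fun _ _ h => μ.antitone h
  rw [mul_sum, mul_sum, ← sum_add_distrib, ← coe_LtruncHom, map_sum]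
  exact sum_congr rfl fun r hr => Ltrunc_Ktilde_row hp μ.part_len (mem_range.mp hr)
end

section
/- Let μ, ν be partitions and let μ' = (μ_1 - 1, μ_2 - 1, …) be μ with its first column removed. Define E_{μ,ν} = Σ_{□∈μ} q^{-a_ν(□)} t^{l_μ(□)+1} + Σ_{□∈ν} q^{a_μ(□)+1} t^{-l_ν(□)}. Then E_{μ,ν} - q·E_{μ',ν} = (1-q)·t^{l(μ)}·B_ν^* + q t·(t^{l(μ)} - 1)/(t - 1), where B_ν^* = Σ_{□∈ν} q^{-c(□)} t^{-r(□)}. -/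
open Finset

section Aux

variable {K : Type*} [Field K] (q t : K)

lemma colHeight_zero' (p : ℕ → ℕ) (l : ℕ) (hp : ∀ i, i < l ↔ 0 < p i) :
    colHeight p l 0 = l := by
  unfold colHeight
  rw [filter_true_of_mem, card_range]
  intro i hi
  exact (hp i).1 (mem_range.1 hi)

lemma colHeight_shift (p : ℕ → ℕ) (l c : ℕ) :
    colHeight (fun r => p r - 1) l c = colHeight p l (c + 1) := by
  unfold colHeight
  congr 1
  apply filter_congr
  intro i _
  show c < p i - 1 ↔ c + 1 < p i
  omega

lemma lt_colHeight_iff_s16 (p : ℕ → ℕ) (hmono : ∀ ⦃i j : ℕ⦄, i ≤ j → p j ≤ p i)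
    (l c r : ℕ) : r < colHeight p l c ↔ (r < l ∧ c < p r) := by
  constructor
  · intro h
    by_contra hc
    have hsub : (range l).filter (fun r' => c < p r') ⊆ range r := by
      intro j hj
      simp only [mem_filter, mem_range] at hj ⊢
      by_contra hjr
      push_neg at hjr
      exact hc ⟨lt_of_le_of_lt hjr hj.1, lt_of_lt_of_le hj.2 (hmono hjr)⟩
    have h2 := card_le_card hsub
    rw [card_range] at h2
    exact absurd (h.trans_le h2) (lt_irrefl r)
  · rintro ⟨h1, h2⟩
    have hsub : range (r + 1) ⊆ (range l).filter (fun r' => c < p r') := by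
      intro j hj
      simp only [mem_filter, mem_range] at hj ⊢
      have hjr : j ≤ r := Nat.lt_succ_iff.1 hj
      exact ⟨lt_of_le_of_lt hjr h1, lt_of_lt_of_le h2 (hmono hjr)⟩
    have h2' := card_le_card hsub
    rw [card_range] at h2'
    exact h2'

lemma geom_sum_zpow (hq : q ≠ 0) : ∀ n : ℕ,
    (1 - q) * ∑ c ∈ range n, q ^ (-(c : ℤ)) = q ^ (1 - (n : ℤ)) - q
  | 0 => by simp
  | (n + 1) => by
    rw [sum_range_succ, mul_add, geom_sum_zpow hq n]
    have h1 : q ^ (1 - (n : ℤ)) = q * q ^ (-(n : ℤ)) := by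
      rw [show (1 - (n : ℤ)) = 1 + -(n : ℤ) by ring, zpow_add₀ hq, zpow_one]
    have h2 : q ^ (1 - ((n : ℕ) + 1 : ℤ)) = q ^ (-(n : ℤ)) := by
      congr 1; ring
    have h3 : (1 - (((n : ℕ) + 1 : ℕ) : ℤ)) = (1 - ((n : ℕ) + 1 : ℤ)) := by push_cast; ring
    rw [h3, h2, h1]
    ring

lemma L1 (hq : q ≠ 0) (pμ pν : ℕ → ℕ) (lμ : ℕ)
    (hpos : ∀ i, i < lμ ↔ 0 < pμ i) :
    (∑ r ∈ range lμ, ∑ c ∈ range (pμ r),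
        q ^ (-(armZ pν r c)) * t ^ (legZ pμ lμ r c + 1))
      - q * (∑ r ∈ range lμ, ∑ c ∈ range (pμ r - 1),
          q ^ (-(armZ pν r c)) * t ^ (legZ (fun r => pμ r - 1) lμ r c + 1))
    = ∑ r ∈ range lμ, q ^ (1 - (pν r : ℤ)) * t ^ ((lμ : ℤ) - r) := by
  rw [mul_sum, ← sum_sub_distrib]
  refine sum_congr rfl fun r hr => ?_
  rw [mem_range] at hr
  have hp : 0 < pμ r := (hpos r).1 hr
  obtain ⟨m, hm⟩ : ∃ m, pμ r = m + 1 := ⟨pμ r - 1, by omega⟩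
  have hm1 : pμ r - 1 = m := by omega
  rw [hm1, hm, sum_range_succ']
  have hcol0 : colHeight pμ lμ 0 = lμ := colHeight_zero' pμ lμ hpos
  have hf0 : q ^ (-(armZ pν r 0)) * t ^ (legZ pμ lμ r 0 + 1)
      = q ^ (1 - (pν r : ℤ)) * t ^ ((lμ : ℤ) - r) := by
    unfold armZ legZ
    rw [hcol0]
    congr 1 <;> [skip; skip] <;> congr 1 <;> push_cast <;> ring
  have hfs : ∀ c ∈ range m,
      q ^ (-(armZ pν r (c + 1))) * t ^ (legZ pμ lμ r (c + 1) + 1)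
      = q * (q ^ (-(armZ pν r c)) * t ^ (legZ (fun r => pμ r - 1) lμ r c + 1)) := by
    intro c _
    have hleg : legZ (fun r => pμ r - 1) lμ r c = legZ pμ lμ r (c + 1) := by
      unfold legZ
      rw [colHeight_shift]
    have harm : -(armZ pν r (c + 1)) = 1 + -(armZ pν r c) := by
      unfold armZ; push_cast; ring
    rw [hleg, harm, zpow_add₀ hq, zpow_one]
    ring
  rw [sum_congr rfl hfs, hf0, mul_sum]
  ring

lemma L2 (hq : q ≠ 0) (pμ pν : ℕ → ℕ) (lμ lν : ℕ)
    (hposμ : ∀ i, i < lμ ↔ 0 < pμ i) :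
    (∑ r ∈ range lν, ∑ c ∈ range (pν r),
        q ^ (armZ pμ r c + 1) * t ^ (-(legZ pν lν r c)))
      - q * (∑ r ∈ range lν, ∑ c ∈ range (pν r),
          q ^ (armZ (fun r => pμ r - 1) r c + 1) * t ^ (-(legZ pν lν r c)))
    = (1 - q) * ∑ r ∈ range lν,
        (if lμ ≤ r then
          ∑ c ∈ range (pν r), q ^ (-(c : ℤ)) * t ^ (-(legZ pν lν r c)) else 0) := by
  rw [mul_sum, mul_sum, ← sum_sub_distrib]
  refine sum_congr rfl fun r _ => ?_
  by_cases hcase : lμ ≤ r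
  · rw [if_pos hcase]
    have h0 : pμ r = 0 := by
      have := hposμ r; omega
    rw [mul_sum, mul_sum, ← sum_sub_distrib]
    refine sum_congr rfl fun c _ => ?_
    have e1 : armZ pμ r c + 1 = -(c : ℤ) := by
      unfold armZ; rw [h0]; push_cast; ring
    have e2 : armZ (fun r => pμ r - 1) r c + 1 = -(c : ℤ) := by
      show ((pμ r - 1 : ℕ) : ℤ) - 1 - c + 1 = -(c : ℤ)
      rw [h0]
      push_cast; ring
    rw [e1, e2]
    ring
  · rw [if_neg hcase, mul_zero, mul_sum, sub_eq_zero]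
    refine sum_congr rfl fun c _ => ?_
    have hp : 0 < pμ r := by
      have := hposμ r; omega
    have e : armZ pμ r c + 1 = 1 + (armZ (fun r => pμ r - 1) r c + 1) := by
      show (pμ r : ℤ) - 1 - c + 1 = 1 + (((pμ r - 1 : ℕ) : ℤ) - 1 - c + 1)
      have : ((pμ r - 1 : ℕ) : ℤ) = (pμ r : ℤ) - 1 := by
        push_cast [hp]; ring
      rw [this]; ring
    rw [e, zpow_add₀ hq, zpow_one]
    ring

lemma sum_ite_colMajor (pν : ℕ → ℕ) (lν lμ : ℕ)
    (hmono : ∀ ⦃i j : ℕ⦄, i ≤ j → pν j ≤ pν i) (F : ℕ → ℕ → K) :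
    ∑ r ∈ range lν, (if lμ ≤ r then ∑ c ∈ range (pν r), F r c else 0)
      = ∑ c ∈ range (pν 0), ∑ r ∈ Ico lμ (colHeight pν lν c), F r c := by
  have h1 : ∀ r ∈ range lν,
      (if lμ ≤ r then ∑ c ∈ range (pν r), F r c else 0)
      = ∑ c ∈ range (pν 0), (if lμ ≤ r ∧ c < pν r then F r c else 0) := by
    intro r _
    by_cases hc : lμ ≤ r
    · simp only [hc, true_and, if_pos]
      rw [← sum_filter]
      congr 1
      ext c
      simp only [mem_filter, mem_range]
      have := hmono (Nat.zero_le r)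
      omega
    · simp [hc]
  rw [sum_congr rfl h1, sum_comm]
  refine sum_congr rfl fun c _ => ?_
  rw [← sum_filter]
  congr 1
  ext r
  simp only [mem_filter, mem_range, mem_Ico]
  have := lt_colHeight_iff_s16 pν hmono lν c r
  tauto

lemma col_reflect (ht : t ≠ 0) (a b : ℕ) :
    ∑ r ∈ Ico a b, t ^ ((r : ℤ) + 1 - b) = ∑ r ∈ Ico a b, t ^ ((a : ℤ) - r) := by
  rw [sum_Ico_eq_sum_range, sum_Ico_eq_sum_range]
  have h2 : ∀ j ∈ range (b - a), t ^ ((a : ℤ) - (a + j : ℕ)) = t ^ (-(j : ℤ)) := by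
    intro j _
    congr 1; push_cast; ring
  rw [sum_congr rfl h2, ← sum_range_reflect (fun j => t ^ (-(j : ℤ))) (b - a)]
  refine sum_congr rfl fun j hj => ?_
  rw [mem_range] at hj
  congr 1
  have : ((b - a - 1 - j : ℕ) : ℤ) = (b : ℤ) - a - 1 - j := by omega
  rw [this]
  omega

lemma L3 (hq : q ≠ 0) (ht : t ≠ 0) (pν : ℕ → ℕ) (lν lμ : ℕ)
    (hmono : ∀ ⦃i j : ℕ⦄, i ≤ j → pν j ≤ pν i) :
    ∑ r ∈ range lν, (if lμ ≤ r then
        ∑ c ∈ range (pν r), q ^ (-(c : ℤ)) * t ^ (-(legZ pν lν r c)) else 0)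
    = ∑ r ∈ range lν, (if lμ ≤ r then
        ∑ c ∈ range (pν r), q ^ (-(c : ℤ)) * t ^ ((lμ : ℤ) - r) else 0) := by
  rw [sum_ite_colMajor pν lν lμ hmono, sum_ite_colMajor pν lν lμ hmono]
  refine sum_congr rfl fun c _ => ?_
  have h1 : ∀ r ∈ Ico lμ (colHeight pν lν c),
      q ^ (-(c : ℤ)) * t ^ (-(legZ pν lν r c))
      = q ^ (-(c : ℤ)) * t ^ ((r : ℤ) + 1 - (colHeight pν lν c : ℤ)) := by
    intro r _
    congr 2
    unfold legZ; ring
  rw [sum_congr rfl h1, ← mul_sum, ← mul_sum, col_reflect t ht lμ (colHeight pν lν c)]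

end Aux

/-- with `μ'` obtained from `μ` by removing the first column
(parts `μᵢ - 1`), one has
`E_{μ,ν} - q·E_{μ',ν} = (1-q)·t^{l(μ)}·B_ν^* + qt·(t^{l(μ)}-1)/(t-1)`,
where `B_ν^* = Σ_{□∈ν} q^{-c(□)} t^{-r(□)}` and
`(t^{l(μ)}-1)/(t-1) = Σ_{i=0}^{l(μ)-1} tⁱ`. -/
theorem Efun_removeFirstColumn {K : Type*} [Field K] (q t : K) (hq : q ≠ 0) (ht : t ≠ 0)
    (μ ν : YDPartition) :
    Efun q t μ.part μ.len ν.part ν.len -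
        q * Efun q t (fun r => μ.part r - 1) μ.len ν.part ν.len =
      (1 - q) * t ^ (μ.len : ℤ) *
          (∑ r ∈ range ν.len, ∑ c ∈ range (ν.part r), q ^ (-(c : ℤ)) * t ^ (-(r : ℤ))) +
        q * t * ∑ i ∈ range μ.len, t ^ (i : ℤ) := by
  set pμ := μ.part with hpμ
  set lμ := μ.len with hlμ
  set pν := ν.part with hpν
  set lν := ν.len with hlν
  have hmonoν : ∀ ⦃i j : ℕ⦄, i ≤ j → pν j ≤ pν i := ν.antitone
  have hposμ : ∀ i, i < lμ ↔ 0 < pμ i := μ.pos_iff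
  have hposν : ∀ i, i < lν ↔ 0 < pν i := ν.pos_iff
  have e1 := L1 q t hq pμ pν lμ hposμ
  have e2 := L2 q t hq pμ pν lμ lν hposμ
  have e3 := L3 q t hq ht pν lν lμ hmonoν
  -- e4 : t^lμ * B* = U
  have e4 : t ^ (lμ : ℤ) * (∑ r ∈ range lν, ∑ c ∈ range (pν r),
        q ^ (-(c : ℤ)) * t ^ (-(r : ℤ)))
      = ∑ r ∈ range lν, ∑ c ∈ range (pν r), q ^ (-(c : ℤ)) * t ^ ((lμ : ℤ) - r) := by
    rw [mul_sum]
    refine sum_congr rfl fun r _ => ?_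
    rw [mul_sum]
    refine sum_congr rfl fun c _ => ?_
    rw [show ((lμ : ℤ) - r) = (lμ : ℤ) + (-(r : ℤ)) by ring, zpow_add₀ ht]
    ring
  -- e5 : U = T2 + T3
  have e5 : (∑ r ∈ range lν, ∑ c ∈ range (pν r), q ^ (-(c : ℤ)) * t ^ ((lμ : ℤ) - r))
      = (∑ r ∈ range lν, (if lμ ≤ r then
          ∑ c ∈ range (pν r), q ^ (-(c : ℤ)) * t ^ ((lμ : ℤ) - r) else 0))
        + ∑ r ∈ range lν, (if ¬ lμ ≤ r then
          ∑ c ∈ range (pν r), q ^ (-(c : ℤ)) * t ^ ((lμ : ℤ) - r) else 0) := by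
    rw [← sum_add_distrib]
    refine sum_congr rfl fun r _ => ?_
    by_cases hc : lμ ≤ r <;> simp [hc]
  -- e6 : (1-q) * T3 = V
  have e6 : (1 - q) * ∑ r ∈ range lν, (if ¬ lμ ≤ r then
          ∑ c ∈ range (pν r), q ^ (-(c : ℤ)) * t ^ ((lμ : ℤ) - r) else 0)
      = ∑ r ∈ range lν, (if ¬ lμ ≤ r then
          (q ^ (1 - (pν r : ℤ)) - q) * t ^ ((lμ : ℤ) - r) else 0) := by
    rw [mul_sum]
    refine sum_congr rfl fun r _ => ?_
    by_cases hc : lμ ≤ r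
    · rw [if_neg (not_not_intro hc), if_neg (not_not_intro hc), mul_zero]
    · rw [if_pos hc, if_pos hc, ← sum_mul, ← mul_assoc, geom_sum_zpow q hq]
  -- e7 : V = W
  have e7 : (∑ r ∈ range lν, (if ¬ lμ ≤ r then
          (q ^ (1 - (pν r : ℤ)) - q) * t ^ ((lμ : ℤ) - r) else 0))
      = ∑ r ∈ range lμ, (q ^ (1 - (pν r : ℤ)) - q) * t ^ ((lμ : ℤ) - r) := by
    rw [← sum_filter]
    have hset : (range lν).filter (fun r => ¬ lμ ≤ r) = range (min lν lμ) := by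
      ext r
      simp only [mem_filter, mem_range, Nat.lt_min]
      omega
    rw [hset]
    apply sum_subset
    · intro r hr
      rw [mem_range] at hr ⊢
      omega
    · intro r hr hr2
      rw [mem_range] at hr hr2
      have hrν : lν ≤ r := by omega
      have h0 : pν r = 0 := by
        have := hposν r; omega
      rw [h0]
      norm_num
  -- e8 : q*t*Σ t^i = q * Z
  have e8 : q * t * (∑ i ∈ range lμ, t ^ (i : ℤ))
      = q * ∑ r ∈ range lμ, t ^ ((lμ : ℤ) - r) := by
    have hz : (∑ r ∈ range lμ, t ^ ((lμ : ℤ) - r))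
        = ∑ i ∈ range lμ, t ^ ((i : ℤ) + 1) := by
      rw [← sum_range_reflect (fun i => t ^ ((i : ℤ) + 1)) lμ]
      refine sum_congr rfl fun r hr => ?_
      rw [mem_range] at hr
      congr 1
      have : ((lμ - 1 - r : ℕ) : ℤ) = (lμ : ℤ) - 1 - r := by omega
      rw [this]
      ring
    rw [hz, mul_sum, mul_sum]
    refine sum_congr rfl fun i _ => ?_
    rw [zpow_add_one₀ ht]
    ring
  -- e9 : W = S1 - q*Z
  have e9 : (∑ r ∈ range lμ, (q ^ (1 - (pν r : ℤ)) - q) * t ^ ((lμ : ℤ) - r))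
      = (∑ r ∈ range lμ, q ^ (1 - (pν r : ℤ)) * t ^ ((lμ : ℤ) - r))
        - q * ∑ r ∈ range lμ, t ^ ((lμ : ℤ) - r) := by
    rw [mul_sum, ← sum_sub_distrib]
    refine sum_congr rfl fun r _ => ?_
    ring
  simp only [Efun]
  linear_combination e1 + e2 + (1-q)*e3 - (1-q)*e4 - (1-q)*e5 - e6 - e7 - e8 - e9
end

section
/- For any partition μ with l(μ) parts and z_i(μ) = t^{-l(μ)+i} q^{μ_i}, the product (1-t)·(Σ_{i=1}^{l(μ)} z_i(μ))·(Σ_{j=1}^{l(μ)} z_j(μ)^{-1}) equals (q^{-1}-1)·E_{μ,μ} - t^{l(μ)}(q^{-1}-1)·B_μ^* + t^{1-l(μ)}(q-1)·B_μ - (t^{l(μ)}-1)·Σ_{i=0}^{l(μ)-1} t^{-i}, where E_{μ,μ} = Σ_{□∈μ} q^{-a_μ(□)} t^{l_μ(□)+1} + Σ_{□∈μ} q^{a_μ(□)+1} t^{-l_μ(□)}, B_μ = Σ_{□∈μ} q^{c(□)} t^{r(□)}, and B_μ^* is B_μ with q → q^{-1}, t → t^{-1}. -/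
open Finset

/- ------------------ auxiliary development ------------------- -/

noncomputable def Bsum {K : Type*} [Field K] (q t : K) (p : ℕ → ℕ) (l : ℕ) : K :=
  ∑ r ∈ range l, ∑ c ∈ range (p r), q ^ (c : ℤ) * t ^ (r : ℤ)

noncomputable def Bstar {K : Type*} [Field K] (q t : K) (p : ℕ → ℕ) (l : ℕ) : K :=
  ∑ r ∈ range l, ∑ c ∈ range (p r), q ^ (-(c : ℤ)) * t ^ (-(r : ℤ))

section Aux
variable {K : Type*} [Field K]

lemma geo1 (x : K) (n : ℕ) : (x - 1) * ∑ c ∈ range n, x ^ (c:ℤ) = x ^ (n:ℤ) - 1 := by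
  simp only [zpow_natCast]
  rw [mul_comm, geom_sum_mul]

lemma geo2 (x : K) (hx : x ≠ 0) (n : ℕ) :
    x ^ (n:ℤ) * ∑ c ∈ range n, x ^ (-(c:ℤ)) = x * ∑ c ∈ range n, x ^ (c:ℤ) := by
  rw [Finset.mul_sum, Finset.mul_sum, ← Finset.sum_range_reflect (fun c => x * x ^ (c:ℤ)) n]
  apply Finset.sum_congr rfl
  intro c hc
  have hc' : c < n := mem_range.mp hc
  have h1 : ((n - 1 - c : ℕ) : ℤ) = (n:ℤ) - 1 - c := by omega
  have h2 : (n:ℤ) + -(c:ℤ) = 1 + ((n:ℤ) - 1 - c) := by ring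
  rw [h1, ← zpow_add₀ hx, h2, zpow_add₀ hx, zpow_one]

lemma geo3 (x : K) (hx : x ≠ 0) (n : ℕ) :
    (x - 1) * ∑ c ∈ range n, x ^ (-(c:ℤ)) = x - x * (x ^ (n:ℤ))⁻¹ := by
  have h1 := geo1 x⁻¹ n
  simp only [inv_zpow, ← zpow_neg] at h1
  rw [zpow_neg x (n:ℤ)] at h1
  linear_combination (-x) * h1 + (∑ c ∈ range n, x ^ (-(c:ℤ))) * (mul_inv_cancel₀ hx)

lemma sum_split {f g : ℕ → K} {m n : ℕ} (h : m ≤ n) (hfg : ∀ c, m ≤ c → f c = g c) :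
    ∑ c ∈ range n, f c = ∑ c ∈ range n, g c + ∑ c ∈ range m, (f c - g c) := by
  have key : ∑ c ∈ range n, (f c - g c) = ∑ c ∈ range m, (f c - g c) := by
    rw [range_eq_Ico, ← Finset.sum_Ico_consecutive _ (Nat.zero_le m) h,
      show ∑ c ∈ Finset.Ico m n, (f c - g c) = 0 from
        Finset.sum_eq_zero (fun c hc => by rw [hfg c (Finset.mem_Ico.mp hc).1]; ring),
      add_zero, ← range_eq_Ico]
  rw [Finset.sum_sub_distrib] at key
  linear_combination key

lemma Bsum_rel (q t : K) (p : ℕ → ℕ) (l : ℕ) :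
    (q - 1) * Bsum q t p l =
      (∑ r ∈ range l, q ^ ((p r : ℤ)) * t ^ ((r : ℤ))) - ∑ r ∈ range l, t ^ ((r : ℤ)) := by
  unfold Bsum
  rw [Finset.mul_sum, ← Finset.sum_sub_distrib]
  refine Finset.sum_congr rfl fun r _ => ?_
  have hs : ∑ c ∈ range (p r), q ^ (c:ℤ) * t ^ (r:ℤ)
      = (∑ c ∈ range (p r), q ^ (c:ℤ)) * t ^ (r:ℤ) := (Finset.sum_mul _ _ _).symm
  linear_combination (q - 1) * hs + t ^ (r:ℤ) * geo1 q (p r)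

lemma Bstar_rel (q t : K) (hq : q ≠ 0) (p : ℕ → ℕ) (l : ℕ) :
    (q - 1) * Bstar q t p l =
      q * (∑ r ∈ range l, t ^ (-(r : ℤ)))
        - q * ∑ r ∈ range l, (q ^ ((p r : ℤ)))⁻¹ * t ^ (-(r : ℤ)) := by
  unfold Bstar
  rw [Finset.mul_sum, Finset.mul_sum, Finset.mul_sum, ← Finset.sum_sub_distrib]
  refine Finset.sum_congr rfl fun r _ => ?_
  have hs : ∑ c ∈ range (p r), q ^ (-(c:ℤ)) * t ^ (-(r:ℤ))
      = (∑ c ∈ range (p r), q ^ (-(c:ℤ))) * t ^ (-(r:ℤ)) := (Finset.sum_mul _ _ _).symm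
  linear_combination (q - 1) * hs + t ^ (-(r:ℤ)) * geo3 q hq (p r)

end Aux

lemma colHeight_succ (p : ℕ → ℕ) (l c : ℕ) :
    colHeight p (l+1) c = colHeight p l c + if c < p l then 1 else 0 := by
  unfold colHeight
  rw [Finset.range_add_one, Finset.filter_insert]
  split
  · rw [Finset.card_insert_of_notMem (by simp)]
  · simp

lemma colHeight_of_lt (p : ℕ → ℕ) (hp : ∀ ⦃i j : ℕ⦄, i ≤ j → p j ≤ p i)
    {l c : ℕ} (h : c < p l) : colHeight p l c = l := by
  unfold colHeight
  rw [Finset.filter_true_of_mem, Finset.card_range]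
  intro r hr
  exact lt_of_lt_of_le h (hp (le_of_lt (Finset.mem_range.mp hr)))

lemma colHeight_last (p : ℕ → ℕ) (hp : ∀ ⦃i j : ℕ⦄, i ≤ j → p j ≤ p i)
    {l c : ℕ} (h : c < p l) : colHeight p (l+1) c = l + 1 := by
  unfold colHeight
  rw [Finset.filter_true_of_mem, Finset.card_range]
  intro r hr
  exact lt_of_lt_of_le h (hp (Nat.lt_succ_iff.mp (Finset.mem_range.mp hr)))

section Main
variable {K : Type*} [Field K]

lemma Efun_succ (q t : K) (hq : q ≠ 0) (ht : t ≠ 0) (p : ℕ → ℕ)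
    (hp : ∀ ⦃i j : ℕ⦄, i ≤ j → p j ≤ p i) (l : ℕ) :
    Efun q t p (l+1) p (l+1) = Efun q t p l p l
      + (t - 1) * t ^ (l:ℤ) * ((q * ∑ c ∈ range (p l), q ^ (c:ℤ)) *
          ∑ r ∈ range l, (q ^ ((p r : ℤ)))⁻¹ * t ^ (-(r:ℤ)))
      + ((t ^ (l:ℤ))⁻¹ - t * (t ^ (l:ℤ))⁻¹) * ((∑ r ∈ range l, q ^ ((p r : ℤ)) * t ^ ((r:ℤ))) *
          ∑ c ∈ range (p l), q ^ (-(c:ℤ)))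
      + t * (∑ c ∈ range (p l), q ^ (-(c:ℤ))) + q * ∑ c ∈ range (p l), q ^ (c:ℤ) := by
  have leg_stable : ∀ c, p l ≤ c → ∀ r : ℕ, legZ p (l+1) r c = legZ p l r c := by
    intro c hc r
    unfold legZ
    rw [colHeight_succ, if_neg (not_lt.mpr hc), add_zero]
  have key_leg : ∀ c, c < p l → ∀ r : ℕ, legZ p (l+1) r c = (l:ℤ) - r := by
    intro c hc r
    unfold legZ
    rw [colHeight_last p hp hc]
    push_cast
    ring
  have leg_old : ∀ c, c < p l → ∀ r : ℕ, legZ p l r c = (l:ℤ) - 1 - r := by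
    intro c hc r
    unfold legZ
    rw [colHeight_of_lt p hp hc]
  have hTi : t ^ (-(l:ℤ)) = (t ^ (l:ℤ))⁻¹ := zpow_neg t (l:ℤ)
  -- first double sum
  have hS1 : (∑ r ∈ range (l+1), ∑ c ∈ range (p r),
        q ^ (-(armZ p r c)) * t ^ (legZ p (l+1) r c + 1))
      = (∑ r ∈ range l, ∑ c ∈ range (p r), q ^ (-(armZ p r c)) * t ^ (legZ p l r c + 1))
        + (t - 1) * t ^ (l:ℤ) * ((q * ∑ c ∈ range (p l), q ^ (c:ℤ)) *
            ∑ r ∈ range l, (q ^ ((p r : ℤ)))⁻¹ * t ^ (-(r:ℤ)))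
        + t * (∑ c ∈ range (p l), q ^ (-(c:ℤ))) := by
    rw [Finset.sum_range_succ]
    have hlast : ∑ c ∈ range (p l), q ^ (-(armZ p l c)) * t ^ (legZ p (l+1) l c + 1)
        = t * ∑ c ∈ range (p l), q ^ (-(c:ℤ)) := by
      rw [Finset.mul_sum, ← Finset.sum_range_reflect (fun c => t * q ^ (-(c:ℤ))) (p l)]
      refine Finset.sum_congr rfl fun c hc => ?_
      have hc' : c < p l := mem_range.mp hc
      rw [key_leg c hc' l]
      unfold armZ
      have e1 : -((p l : ℤ) - 1 - c) = (c:ℤ) + 1 - (p l : ℤ) := by ring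
      have e2 : (l:ℤ) - l + 1 = (1:ℤ) := by ring
      have e3 : -((p l - 1 - c : ℕ) : ℤ) = (c:ℤ) + 1 - (p l : ℤ) := by omega
      rw [e1, e2, e3, zpow_one]
      ring
    have hold : ∀ r ∈ range l,
        (∑ c ∈ range (p r), q ^ (-(armZ p r c)) * t ^ (legZ p (l+1) r c + 1))
        = (∑ c ∈ range (p r), q ^ (-(armZ p r c)) * t ^ (legZ p l r c + 1))
          + ∑ c ∈ range (p l),
              (q ^ (-(armZ p r c)) * ((t - 1) * (t ^ (l:ℤ) * t ^ (-(r:ℤ))))) := by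
      intro r hr
      have hm : p l ≤ p r := hp (le_of_lt (mem_range.mp hr))
      rw [sum_split (g := fun c => q ^ (-(armZ p r c)) * t ^ (legZ p l r c + 1)) hm
        (fun c hc => by rw [leg_stable c hc r])]
      congr 1
      refine Finset.sum_congr rfl fun c hc => ?_
      have hc' : c < p l := mem_range.mp hc
      rw [key_leg c hc' r, leg_old c hc' r]
      have e1 : (l:ℤ) - r + 1 = 1 + ((l:ℤ) + -(r:ℤ)) := by ring
      have e2 : (l:ℤ) - 1 - r + 1 = (l:ℤ) + -(r:ℤ) := by ring
      rw [e1, e2, zpow_add₀ ht, zpow_add₀ ht, zpow_one]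
      ring
    rw [Finset.sum_congr rfl hold, Finset.sum_add_distrib, hlast]
    have hmid : ∑ r ∈ range l, ∑ c ∈ range (p l),
          (q ^ (-(armZ p r c)) * ((t - 1) * (t ^ (l:ℤ) * t ^ (-(r:ℤ)))))
        = (t - 1) * t ^ (l:ℤ) * ((q * ∑ c ∈ range (p l), q ^ (c:ℤ)) *
            ∑ r ∈ range l, (q ^ ((p r : ℤ)))⁻¹ * t ^ (-(r:ℤ))) := by
      have hrow : ∀ r ∈ range l, ∑ c ∈ range (p l),
            (q ^ (-(armZ p r c)) * ((t - 1) * (t ^ (l:ℤ) * t ^ (-(r:ℤ)))))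
          = (∑ c ∈ range (p l), q ^ (c:ℤ)) *
              (q * (q ^ ((p r : ℤ)))⁻¹ * ((t - 1) * (t ^ (l:ℤ) * t ^ (-(r:ℤ))))) := by
        intro r _
        rw [Finset.sum_mul]
        refine Finset.sum_congr rfl fun c _ => ?_
        unfold armZ
        have e1 : -((p r : ℤ) - 1 - c) = (c:ℤ) + 1 + -(p r : ℤ) := by ring
        rw [e1, zpow_add₀ hq, zpow_add₀ hq, zpow_one, zpow_neg]
        ring
      rw [Finset.sum_congr rfl hrow, ← Finset.mul_sum]
      have hY : ∑ r ∈ range l, (q * (q ^ ((p r : ℤ)))⁻¹ * ((t - 1) * (t ^ (l:ℤ) * t ^ (-(r:ℤ)))))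
          = (t - 1) * t ^ (l:ℤ) * q * ∑ r ∈ range l, (q ^ ((p r : ℤ)))⁻¹ * t ^ (-(r:ℤ)) := by
        rw [Finset.mul_sum]
        exact Finset.sum_congr rfl fun r _ => by ring
      rw [hY]
      ring
    rw [hmid]
  -- second double sum
  have hS2 : (∑ r ∈ range (l+1), ∑ c ∈ range (p r),
        q ^ (armZ p r c + 1) * t ^ (-(legZ p (l+1) r c)))
      = (∑ r ∈ range l, ∑ c ∈ range (p r), q ^ (armZ p r c + 1) * t ^ (-(legZ p l r c)))
        + ((t ^ (l:ℤ))⁻¹ - t * (t ^ (l:ℤ))⁻¹) *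
            ((∑ r ∈ range l, q ^ ((p r : ℤ)) * t ^ ((r:ℤ))) *
              ∑ c ∈ range (p l), q ^ (-(c:ℤ)))
        + q * ∑ c ∈ range (p l), q ^ (c:ℤ) := by
    rw [Finset.sum_range_succ]
    have hlast : ∑ c ∈ range (p l), q ^ (armZ p l c + 1) * t ^ (-(legZ p (l+1) l c))
        = q * ∑ c ∈ range (p l), q ^ (c:ℤ) := by
      rw [Finset.mul_sum, ← Finset.sum_range_reflect (fun c => q * q ^ (c:ℤ)) (p l)]
      refine Finset.sum_congr rfl fun c hc => ?_
      have hc' : c < p l := mem_range.mp hc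
      rw [key_leg c hc' l]
      unfold armZ
      have e1 : (p l : ℤ) - 1 - c + 1 = 1 + ((p l : ℤ) - 1 - c) := by ring
      have e2 : -((l:ℤ) - l) = (0:ℤ) := by ring
      have e3 : ((p l - 1 - c : ℕ) : ℤ) = (p l : ℤ) - 1 - c := by omega
      rw [e1, e2, e3, zpow_add₀ hq, zpow_one, zpow_zero]
      ring
    have hold : ∀ r ∈ range l,
        (∑ c ∈ range (p r), q ^ (armZ p r c + 1) * t ^ (-(legZ p (l+1) r c)))
        = (∑ c ∈ range (p r), q ^ (armZ p r c + 1) * t ^ (-(legZ p l r c)))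
          + ∑ c ∈ range (p l),
              (q ^ (armZ p r c + 1) *
                (((t ^ (l:ℤ))⁻¹ - t * (t ^ (l:ℤ))⁻¹) * t ^ ((r:ℤ)))) := by
      intro r hr
      have hm : p l ≤ p r := hp (le_of_lt (mem_range.mp hr))
      rw [sum_split (g := fun c => q ^ (armZ p r c + 1) * t ^ (-(legZ p l r c))) hm
        (fun c hc => by rw [leg_stable c hc r])]
      congr 1
      refine Finset.sum_congr rfl fun c hc => ?_
      have hc' : c < p l := mem_range.mp hc
      rw [key_leg c hc' r, leg_old c hc' r]
      have e1 : -((l:ℤ) - r) = (r:ℤ) + -(l:ℤ) := by ring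
      have e2 : -((l:ℤ) - 1 - r) = (r:ℤ) + 1 + -(l:ℤ) := by ring
      rw [e1, e2, zpow_add₀ ht, zpow_add₀ ht, zpow_add₀ ht, zpow_one, zpow_neg]
      ring
    rw [Finset.sum_congr rfl hold, Finset.sum_add_distrib, hlast]
    have hmid : ∑ r ∈ range l, ∑ c ∈ range (p l),
          (q ^ (armZ p r c + 1) * (((t ^ (l:ℤ))⁻¹ - t * (t ^ (l:ℤ))⁻¹) * t ^ ((r:ℤ))))
        = ((t ^ (l:ℤ))⁻¹ - t * (t ^ (l:ℤ))⁻¹) *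
            ((∑ r ∈ range l, q ^ ((p r : ℤ)) * t ^ ((r:ℤ))) *
              ∑ c ∈ range (p l), q ^ (-(c:ℤ))) := by
      have hrow : ∀ r ∈ range l, ∑ c ∈ range (p l),
            (q ^ (armZ p r c + 1) * (((t ^ (l:ℤ))⁻¹ - t * (t ^ (l:ℤ))⁻¹) * t ^ ((r:ℤ))))
          = (∑ c ∈ range (p l), q ^ (-(c:ℤ))) *
              (q ^ ((p r : ℤ)) * (((t ^ (l:ℤ))⁻¹ - t * (t ^ (l:ℤ))⁻¹) * t ^ ((r:ℤ)))) := by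
        intro r _
        rw [Finset.sum_mul]
        refine Finset.sum_congr rfl fun c _ => ?_
        unfold armZ
        have e1 : (p r : ℤ) - 1 - c + 1 = -(c:ℤ) + (p r : ℤ) := by ring
        rw [e1, zpow_add₀ hq]
        ring
      rw [Finset.sum_congr rfl hrow, ← Finset.mul_sum]
      have hY : ∑ r ∈ range l, (q ^ ((p r : ℤ)) * (((t ^ (l:ℤ))⁻¹ - t * (t ^ (l:ℤ))⁻¹) * t ^ ((r:ℤ))))
          = ((t ^ (l:ℤ))⁻¹ - t * (t ^ (l:ℤ))⁻¹) * ∑ r ∈ range l, q ^ ((p r : ℤ)) * t ^ ((r:ℤ)) := by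
        rw [Finset.mul_sum]
        exact Finset.sum_congr rfl fun r _ => by ring
      rw [hY]
      ring
    rw [hmid]
  unfold Efun
  rw [hS1, hS2]
  ring

lemma Efun_eq_s17 (q t : K) (hq : q ≠ 0) (ht : t ≠ 0) (p : ℕ → ℕ)
    (hp : ∀ ⦃i j : ℕ⦄, i ≤ j → p j ≤ p i) (l : ℕ) :
    Efun q t p l p l = q * t * Bsum q t p l + Bstar q t p l
      - (q - 1) * (t - 1) * Bsum q t p l * Bstar q t p l := by
  induction l with
  | zero => simp [Efun, Bsum, Bstar]
  | succ l ih =>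
    have hB' : Bsum q t p (l+1) = Bsum q t p l + t ^ (l:ℤ) * ∑ c ∈ range (p l), q ^ (c:ℤ) := by
      unfold Bsum
      rw [Finset.sum_range_succ, ← Finset.sum_mul, mul_comm (∑ c ∈ range (p l), q ^ (c:ℤ))]
    have hBs' : Bstar q t p (l+1)
        = Bstar q t p l + (t ^ (l:ℤ))⁻¹ * ∑ c ∈ range (p l), q ^ (-(c:ℤ)) := by
      unfold Bstar
      rw [Finset.sum_range_succ, ← Finset.sum_mul, zpow_neg,
        mul_comm (∑ c ∈ range (p l), q ^ (-(c:ℤ)))]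
    rw [Efun_succ q t hq ht p hp l, ih, hB', hBs']
    have h1 := Bsum_rel q t p l
    have h2 := Bstar_rel q t hq p l
    have h3 := geo1 t l
    have h4 := geo3 t ht l
    have h5 := geo1 q (p l)
    have h6 := geo2 q hq (p l)
    have hT : t ^ (l:ℤ) * (t ^ (l:ℤ))⁻¹ = 1 := mul_inv_cancel₀ (zpow_ne_zero _ ht)
    have h5' : q ^ ((p l : ℕ) : ℤ) * ∑ c ∈ range (p l), q ^ (-(c:ℤ))
        = q * ∑ c ∈ range (p l), q ^ (c:ℤ) := h6
    linear_combination
      ((t - 1) * (t ^ (l:ℤ))⁻¹ * (∑ c ∈ range (p l), q ^ (-(c:ℤ)))) * h1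
      + ((t - 1) * t ^ (l:ℤ) * (∑ c ∈ range (p l), q ^ (c:ℤ))) * h2
      + (-((t ^ (l:ℤ))⁻¹ * (∑ c ∈ range (p l), q ^ (-(c:ℤ))))) * h3
      + (q * t ^ (l:ℤ) * (∑ c ∈ range (p l), q ^ (c:ℤ))) * h4
      + ((t - 1) * (∑ c ∈ range (p l), q ^ (-(c:ℤ)))) * h5
      + (t - 1) * h6
      + (-(∑ c ∈ range (p l), q ^ (-(c:ℤ))) - q * t * (∑ c ∈ range (p l), q ^ (c:ℤ))
          + (q - 1) * (t - 1) * (∑ c ∈ range (p l), q ^ (c:ℤ))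
            * (∑ c ∈ range (p l), q ^ (-(c:ℤ)))) * hT

end Main

/-- with `z_i(μ) = t^{-l(μ)+i} q^{μ_i}` (1-based `i`; 0-based below),
`(1-t)·(Σ_i z_i(μ))·(Σ_j z_j(μ)⁻¹)
 = (q⁻¹-1)·E_{μ,μ} - t^{l(μ)}(q⁻¹-1)·B_μ^* + t^{1-l(μ)}(q-1)·B_μ
   - (t^{l(μ)}-1)·Σ_{i=0}^{l(μ)-1} t^{-i}`,
where `B_μ = Σ_{□∈μ} q^{c(□)} t^{r(□)}` and `B_μ^*` is `B_μ` with `q → q⁻¹, t → t⁻¹`. -/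
theorem Ktilde_expansion {K : Type*} [Field K] (q t : K) (hq : q ≠ 0) (ht : t ≠ 0)
    (μ : YDPartition) :
    (1 - t) * (∑ i ∈ range μ.len, t ^ ((i : ℤ) + 1 - μ.len) * q ^ (μ.part i : ℤ)) *
        (∑ j ∈ range μ.len, (t ^ ((j : ℤ) + 1 - μ.len) * q ^ (μ.part j : ℤ))⁻¹) =
      (q⁻¹ - 1) * Efun q t μ.part μ.len μ.part μ.len -
        t ^ (μ.len : ℤ) * (q⁻¹ - 1) *
          (∑ r ∈ range μ.len, ∑ c ∈ range (μ.part r), q ^ (-(c : ℤ)) * t ^ (-(r : ℤ))) +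
        t ^ (1 - (μ.len : ℤ)) * (q - 1) *
          (∑ r ∈ range μ.len, ∑ c ∈ range (μ.part r), q ^ (c : ℤ) * t ^ (r : ℤ)) -
        (t ^ (μ.len : ℤ) - 1) * ∑ i ∈ range μ.len, t ^ (-(i : ℤ)) := by
  have hE := Efun_eq_s17 q t hq ht μ.part μ.antitone μ.len
  have hBdef : (∑ r ∈ range μ.len, ∑ c ∈ range (μ.part r), q ^ (c : ℤ) * t ^ (r : ℤ))
      = Bsum q t μ.part μ.len := rfl
  have hBsdef : (∑ r ∈ range μ.len, ∑ c ∈ range (μ.part r), q ^ (-(c : ℤ)) * t ^ (-(r : ℤ)))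
      = Bstar q t μ.part μ.len := rfl
  have hSum1 : (∑ i ∈ range μ.len, t ^ ((i : ℤ) + 1 - μ.len) * q ^ (μ.part i : ℤ))
      = (t * (t ^ (μ.len : ℤ))⁻¹) *
          ((q - 1) * Bsum q t μ.part μ.len + ∑ i ∈ range μ.len, t ^ (i : ℤ)) := by
    have W : ∑ i ∈ range μ.len, t ^ (i:ℤ) * q ^ (μ.part i : ℤ)
        = (q - 1) * Bsum q t μ.part μ.len + ∑ i ∈ range μ.len, t ^ (i:ℤ) := by
      unfold Bsum
      rw [Finset.mul_sum, ← Finset.sum_add_distrib]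
      refine Finset.sum_congr rfl fun i _ => ?_
      have hs : ∑ c ∈ range (μ.part i), q ^ (c:ℤ) * t ^ (i:ℤ)
          = (∑ c ∈ range (μ.part i), q ^ (c:ℤ)) * t ^ (i:ℤ) := (Finset.sum_mul _ _ _).symm
      linear_combination (1 - q) * hs + (-(t ^ (i:ℤ))) * geo1 q (μ.part i)
    calc (∑ i ∈ range μ.len, t ^ ((i : ℤ) + 1 - μ.len) * q ^ (μ.part i : ℤ))
        = ∑ i ∈ range μ.len, (t * (t ^ (μ.len : ℤ))⁻¹) * (t ^ (i:ℤ) * q ^ (μ.part i : ℤ)) := by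
          refine Finset.sum_congr rfl fun i _ => ?_
          rw [show (i:ℤ) + 1 - (μ.len:ℤ) = 1 + -(μ.len:ℤ) + (i:ℤ) from by ring,
            zpow_add₀ ht, zpow_add₀ ht, zpow_one, zpow_neg]
          ring
      _ = (t * (t ^ (μ.len : ℤ))⁻¹) * ∑ i ∈ range μ.len, t ^ (i:ℤ) * q ^ (μ.part i : ℤ) :=
          (Finset.mul_sum _ _ _).symm
      _ = _ := by rw [W]
  have hSum2 : (∑ j ∈ range μ.len, (t ^ ((j : ℤ) + 1 - μ.len) * q ^ (μ.part j : ℤ))⁻¹)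
      = (t ^ (μ.len : ℤ) * t⁻¹) *
          ((q⁻¹ - 1) * Bstar q t μ.part μ.len + ∑ i ∈ range μ.len, t ^ (-(i : ℤ))) := by
    have W2 : ∑ j ∈ range μ.len, t ^ (-(j:ℤ)) * q ^ (-(μ.part j : ℤ))
        = (q⁻¹ - 1) * Bstar q t μ.part μ.len + ∑ i ∈ range μ.len, t ^ (-(i:ℤ)) := by
      unfold Bstar
      rw [Finset.mul_sum, ← Finset.sum_add_distrib]
      refine Finset.sum_congr rfl fun j _ => ?_
      have hs : ∑ c ∈ range (μ.part j), q ^ (-(c:ℤ)) * t ^ (-(j:ℤ))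
          = (∑ c ∈ range (μ.part j), q ^ (-(c:ℤ))) * t ^ (-(j:ℤ)) := (Finset.sum_mul _ _ _).symm
      have g := geo1 q⁻¹ (μ.part j)
      simp only [inv_zpow, ← zpow_neg] at g
      linear_combination (1 - q⁻¹) * hs + (-(t ^ (-(j:ℤ)))) * g
    calc (∑ j ∈ range μ.len, (t ^ ((j : ℤ) + 1 - μ.len) * q ^ (μ.part j : ℤ))⁻¹)
        = ∑ j ∈ range μ.len, (t ^ (μ.len:ℤ) * t⁻¹) * (t ^ (-(j:ℤ)) * q ^ (-(μ.part j : ℤ))) := by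
          refine Finset.sum_congr rfl fun j _ => ?_
          rw [mul_inv, ← zpow_neg, ← zpow_neg,
            show -((j:ℤ) + 1 - (μ.len:ℤ)) = (μ.len:ℤ) + -1 + -(j:ℤ) from by ring,
            zpow_add₀ ht, zpow_add₀ ht, zpow_neg_one]
          ring
      _ = (t ^ (μ.len:ℤ) * t⁻¹) * ∑ j ∈ range μ.len, t ^ (-(j:ℤ)) * q ^ (-(μ.part j : ℤ)) :=
          (Finset.mul_sum _ _ _).symm
      _ = _ := by rw [W2]
  have ht1L : t ^ (1 - (μ.len : ℤ)) = t * (t ^ (μ.len:ℤ))⁻¹ := by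
    rw [show 1 - (μ.len:ℤ) = 1 + -(μ.len:ℤ) from by ring, zpow_add₀ ht, zpow_one, zpow_neg]
  rw [hBdef, hBsdef, hSum1, hSum2, hE, ht1L]
  have hqq : q * q⁻¹ = 1 := mul_inv_cancel₀ hq
  have htt : t * t⁻¹ = 1 := mul_inv_cancel₀ ht
  have hTT : t ^ (μ.len:ℤ) * (t ^ (μ.len:ℤ))⁻¹ = 1 := mul_inv_cancel₀ (zpow_ne_zero _ ht)
  have hR := geo1 t μ.len
  have hRs := geo3 t ht μ.len
  linear_combination
    ((1 - t) * ((q - 1) * Bsum q t μ.part μ.len + ∑ i ∈ range μ.len, t ^ (i : ℤ))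
        * ((q⁻¹ - 1) * Bstar q t μ.part μ.len + ∑ i ∈ range μ.len, t ^ (-(i : ℤ)))
        * (t ^ (μ.len:ℤ)) * (t ^ (μ.len:ℤ))⁻¹) * htt
    + ((1 - t) * ((q - 1) * Bsum q t μ.part μ.len + ∑ i ∈ range μ.len, t ^ (i : ℤ))
        * ((q⁻¹ - 1) * Bstar q t μ.part μ.len + ∑ i ∈ range μ.len, t ^ (-(i : ℤ)))) * hTT
    + (-((q⁻¹ - 1) * Bstar q t μ.part μ.len + ∑ i ∈ range μ.len, t ^ (-(i : ℤ)))) * hR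
    + (-((q - 1) * Bsum q t μ.part μ.len)) * hRs
    + (-(t * Bsum q t μ.part μ.len)) * hqq
end
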